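/- arXiv:2407.21425 — 6 statements merged into one kernel-verified Lean document; each statement's English description precedes it below -/
import Mathlib

section
/- The function H(z) = e^{-z} - 1 + z on [0, +∞) is convex and strictly increasing on (0,+∞), and satisfies min{1, t²}·H(z) ≤ H(tz) ≤ max{1, t²}·H(z) for all z ≥ 0 and t > 0. -/
open Real Set

/-!
`H' = 1 - e^{-z}` is increasing, and positive for `z > 0`, which gives convexity and strict
monotonicity. The scaling bounds hold for every nonnegative `f` that is increasing on `[0, ∞)`
and for which `f z / z²` is decreasing on `(0, ∞)`: for `t ≤ 1` these two facts are exactly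
`t² f z ≤ f (t z) ≤ f z`, and the case `t ≥ 1` is the case `t⁻¹ ≤ 1` applied at `t z`.
For `H`, `H z / z²` decreases because `z H'(z) ≤ 2 H(z)`: the difference `2 H(z) - z H'(z)`
vanishes at `0` and has derivative `1 - (1 + z) e^{-z} ≥ 0`.
-/

section Scaling

variable {f : ℝ → ℝ}

lemma sq_mul_le_apply_mul (hf : AntitoneOn (fun z => f z / z ^ 2) (Ioi 0)) {t z : ℝ}
    (ht : 0 < t) (ht1 : t ≤ 1) (hz : 0 < z) : t ^ 2 * f z ≤ f (t * z) := by
  have h := hf (mul_pos ht hz) hz (mul_le_of_le_one_left hz.le ht1)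
  rw [div_le_div_iff₀ (by positivity) (by positivity), mul_pow, ← mul_assoc] at h
  exact le_of_mul_le_mul_right (by linarith) (by positivity : 0 < z ^ 2)

lemma min_mul_le_apply_mul_le_max_mul (hmono : MonotoneOn f (Ici 0))
    (hanti : AntitoneOn (fun z => f z / z ^ 2) (Ioi 0)) (h0 : 0 ≤ f 0) {z t : ℝ}
    (hz : 0 ≤ z) (ht : 0 < t) :
    min 1 (t ^ 2) * f z ≤ f (t * z) ∧ f (t * z) ≤ max 1 (t ^ 2) * f z := by
  rcases hz.eq_or_lt with rfl | hz
  · rw [mul_zero]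
    exact ⟨mul_le_of_le_one_left h0 (min_le_left _ _),
      le_mul_of_one_le_left h0 (le_max_left _ _)⟩
  rcases le_total t 1 with ht1 | ht1
  · have ht2 : t ^ 2 ≤ 1 := pow_le_one₀ ht.le ht1
    rw [min_eq_right ht2, max_eq_left ht2, one_mul]
    exact ⟨sq_mul_le_apply_mul hanti ht ht1 hz,
      hmono (mem_Ici.2 (by positivity)) hz.le (mul_le_of_le_one_left hz.le ht1)⟩
  · have ht2 : 1 ≤ t ^ 2 := one_le_pow₀ ht1
    rw [min_eq_left ht2, max_eq_right ht2, one_mul]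
    have h := sq_mul_le_apply_mul hanti (inv_pos.2 ht) (inv_le_one_of_one_le₀ ht1) (mul_pos ht hz)
    rw [inv_mul_cancel_left₀ ht.ne', inv_pow, inv_mul_le_iff₀ (by positivity)] at h
    exact ⟨hmono hz.le (mem_Ici.2 (by positivity)) (le_mul_of_one_le_left hz.le ht1), h⟩

end Scaling

noncomputable def expNegRem (z : ℝ) : ℝ := exp (-z) - 1 + z

lemma expNegRem_zero : expNegRem 0 = 0 := by simp [expNegRem]

lemma continuous_expNegRem : Continuous expNegRem := by unfold expNegRem; fun_prop

lemma hasDerivAt_exp_neg (x : ℝ) : HasDerivAt (fun x => exp (-x)) (-exp (-x)) x := by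
  simpa using (hasDerivAt_neg' x).exp

lemma hasDerivAt_expNegRem (x : ℝ) : HasDerivAt expNegRem (1 - exp (-x)) x := by
  exact (((hasDerivAt_exp_neg x).sub_const 1).add (hasDerivAt_id x)).congr_deriv (by ring)

lemma convexOn_expNegRem : ConvexOn ℝ univ expNegRem :=
  convexOn_of_hasDerivWithinAt2_nonneg convex_univ continuous_expNegRem.continuousOn
    (fun x _ => (hasDerivAt_expNegRem x).hasDerivWithinAt)
    (fun x _ => ((hasDerivAt_exp_neg x).const_sub 1).hasDerivWithinAt.congr_deriv (neg_neg _))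
    (fun x _ => (exp_pos (-x)).le)

lemma strictMonoOn_expNegRem : StrictMonoOn expNegRem (Ici 0) := by
  refine strictMonoOn_of_hasDerivWithinAt_pos (convex_Ici 0) continuous_expNegRem.continuousOn
    (fun x _ => (hasDerivAt_expNegRem x).hasDerivWithinAt) fun x hx => ?_
  rw [interior_Ici, mem_Ioi] at hx
  simpa using hx

lemma mul_one_sub_exp_neg_le_two_mul_expNegRem {z : ℝ} (hz : 0 ≤ z) :
    z * (1 - exp (-z)) ≤ 2 * expNegRem z := by
  set φ : ℝ → ℝ := fun x => 2 * expNegRem x - x * (1 - exp (-x))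
  have hφ : ∀ x, HasDerivAt φ (1 - (1 + x) * exp (-x)) x := fun x =>
    (((hasDerivAt_expNegRem x).const_mul 2).sub
      ((hasDerivAt_id' x).mul ((hasDerivAt_exp_neg x).const_sub 1))).congr_deriv (by ring)
  have hmono : MonotoneOn φ (Ici 0) := by
    refine monotoneOn_of_hasDerivWithinAt_nonneg (convex_Ici 0)
      (continuous_iff_continuousAt.2 fun x => (hφ x).continuousAt).continuousOn
      (fun x _ => (hφ x).hasDerivWithinAt) fun x _ => ?_
    rw [sub_nonneg, exp_neg, ← div_eq_mul_inv, div_le_one (exp_pos x)]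
    linarith [add_one_le_exp x]
  have h := hmono self_mem_Ici hz hz
  simp only [φ, expNegRem_zero] at h
  linarith

lemma antitoneOn_expNegRem_div_sq : AntitoneOn (fun z => expNegRem z / z ^ 2) (Ioi 0) := by
  refine antitoneOn_of_hasDerivWithinAt_nonpos (convex_Ioi 0)
    (f' := fun x => (x * (1 - exp (-x)) - 2 * expNegRem x) / x ^ 3)
    (continuous_expNegRem.continuousOn.div (by fun_prop) fun x hx => (pow_pos hx 2).ne')
    (fun x hx => ?_) fun x hx => ?_ <;> rw [interior_Ioi, mem_Ioi] at hx
  · refine (((hasDerivAt_expNegRem x).div (hasDerivAt_pow 2 x) (by positivity)).congr_deriv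
      ?_).hasDerivWithinAt
    field_simp
    ring
  · exact div_nonpos_of_nonpos_of_nonneg
      (sub_nonpos.2 (mul_one_sub_exp_neg_le_two_mul_expNegRem hx.le)) (by positivity)

theorem stmt_0 (H : ℝ → ℝ) (hH : ∀ z, H z = Real.exp (-z) - 1 + z) :
    ConvexOn ℝ (Set.Ici (0:ℝ)) H ∧ StrictMonoOn H (Set.Ioi (0:ℝ)) ∧
    ∀ z ≥ (0:ℝ), ∀ t > (0:ℝ),
      min 1 (t ^ 2) * H z ≤ H (t * z) ∧ H (t * z) ≤ max 1 (t ^ 2) * H z := by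
  obtain rfl : H = expNegRem := funext hH
  exact ⟨convexOn_expNegRem.subset (subset_univ _) (convex_Ici 0),
    strictMonoOn_expNegRem.mono Ioi_subset_Ici_self, fun z hz t ht =>
      min_mul_le_apply_mul_le_max_mul strictMonoOn_expNegRem.monotoneOn
        antitoneOn_expNegRem_div_sq expNegRem_zero.ge hz ht⟩
end

section
/- The function t ↦ (1 - e^{-t})·t / (e^{-t} - 1 + t) is strictly decreasing on (0, +∞), tends to 2 as t → 0⁺, and tends to 1 as t → +∞. -/
/-!
Write the function as `1 / g` with `g t = 1 / (1 - e^{-t}) - 1 / t`. Then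
`g' t = 1 / t² - e^{-t} / (1 - e^{-t})²`, which is positive because
`1 - e^{-t} = 2 e^{-t/2} sinh (t/2) > t e^{-t/2}`. So `g` is positive and increasing,
and the function decreases. The second-order Taylor expansion of `exp` gives `g t → 1/2`
as `t → 0⁺`, and clearly `g t → 1` as `t → ∞`.
-/

open Real Set Filter Topology
open scoped Nat

lemma tendsto_exp_sub_sum_range_div_pow_nhdsNE (n : ℕ) :
    Tendsto (fun x => (exp x - ∑ i ∈ Finset.range n, x ^ i / i !) / x ^ n) (𝓝[≠] 0)
      (𝓝 (n ! : ℝ)⁻¹) := by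
  have hrem := ((exp_sub_sum_range_succ_isLittleO_pow n).tendsto_div_nhds_zero.mono_left
    (nhdsWithin_le_nhds (s := {0}ᶜ))).const_add (n ! : ℝ)⁻¹
  rw [add_zero] at hrem
  refine hrem.congr' ?_
  filter_upwards [self_mem_nhdsWithin] with x (hx : x ≠ 0)
  rw [Finset.sum_range_succ]
  field_simp
  ring

lemma one_sub_exp_neg_pos {t : ℝ} (ht : 0 < t) : 0 < 1 - exp (-t) := by
  simpa using ht

lemma sq_mul_exp_neg_lt_sq_one_sub_exp_neg {t : ℝ} (ht : 0 < t) :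
    t ^ 2 * exp (-t) < (1 - exp (-t)) ^ 2 := by
  have hsinh : t < 2 * sinh (t / 2) := by linarith [self_lt_sinh_iff.mpr (half_pos ht)]
  have hfactor : 1 - exp (-t) = exp (-(t / 2)) * (2 * sinh (t / 2)) := by
    rw [sinh_eq, mul_div_cancel₀ _ two_ne_zero, mul_sub, ← exp_add, ← exp_add]
    ring_nf
    rw [exp_zero]
    ring
  calc t ^ 2 * exp (-t) < (2 * sinh (t / 2)) ^ 2 * exp (-t) := by gcongr
    _ = (1 - exp (-t)) ^ 2 := by
      rw [hfactor, mul_pow (exp _), ← exp_nat_mul]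
      ring_nf

noncomputable def invOneSubExpNegSubInv (t : ℝ) : ℝ := (1 - exp (-t))⁻¹ - t⁻¹

lemma invOneSubExpNegSubInv_pos {t : ℝ} (ht : 0 < t) : 0 < invOneSubExpNegSubInv t := by
  have : 1 - exp (-t) < t := by linarith [one_sub_lt_exp_neg ht.ne']
  exact sub_pos.mpr (inv_strictAntiOn (one_sub_exp_neg_pos ht) ht this)

lemma hasDerivAt_invOneSubExpNegSubInv {t : ℝ} (ht : 0 < t) :
    HasDerivAt invOneSubExpNegSubInv ((t ^ 2)⁻¹ - exp (-t) / (1 - exp (-t)) ^ 2) t := by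
  have hden : HasDerivAt (fun t => 1 - exp (-t)) (exp (-t)) t := by
    simpa using ((hasDerivAt_neg t).exp).const_sub 1
  exact ((hden.inv (one_sub_exp_neg_pos ht).ne').sub (hasDerivAt_inv ht.ne')).congr_deriv
    (by ring)

lemma strictMonoOn_invOneSubExpNegSubInv : StrictMonoOn invOneSubExpNegSubInv (Ioi 0) := by
  refine strictMonoOn_of_deriv_pos (convex_Ioi 0)
    (fun t ht => (hasDerivAt_invOneSubExpNegSubInv ht).continuousAt.continuousWithinAt) ?_
  rw [interior_Ioi]
  intro t (ht : 0 < t)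
  have := one_sub_exp_neg_pos ht
  rw [(hasDerivAt_invOneSubExpNegSubInv ht).deriv, sub_pos, div_lt_iff₀ (by positivity),
    inv_mul_eq_div, lt_div_iff₀ (by positivity)]
  linarith [sq_mul_exp_neg_lt_sq_one_sub_exp_neg ht]

lemma tendsto_invOneSubExpNegSubInv_nhdsGT_zero :
    Tendsto invOneSubExpNegSubInv (𝓝[>] 0) (𝓝 (1 / 2)) := by
  have hquot := (tendsto_exp_sub_sum_range_div_pow_nhdsNE 2).div
    (tendsto_exp_sub_sum_range_div_pow_nhdsNE 1) (by positivity)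
  norm_num at hquot
  have hneg : Tendsto Neg.neg (𝓝[>] (0 : ℝ)) (𝓝[≠] 0) := by
    simpa using (tendsto_neg_nhdsGT_neg (a := (0 : ℝ))).mono_right (nhdsLT_le_nhdsNE 0)
  refine (hquot.comp hneg).congr' ?_
  filter_upwards [self_mem_nhdsWithin] with t (ht : 0 < t)
  have : exp (-t) - 1 ≠ 0 := by linarith [one_sub_exp_neg_pos ht]
  have : 1 - exp (-t) ≠ 0 := by linarith [one_sub_exp_neg_pos ht]
  simp only [Pi.div_apply, Function.comp_apply, Finset.sum_range_succ, invOneSubExpNegSubInv]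
  field_simp
  ring

lemma tendsto_invOneSubExpNegSubInv_atTop : Tendsto invOneSubExpNegSubInv atTop (𝓝 1) := by
  have hexp : Tendsto (fun t => exp (-t)) atTop (𝓝 0) :=
    tendsto_exp_atBot.comp tendsto_neg_atTop_atBot
  show Tendsto (fun t => (1 - exp (-t))⁻¹ - t⁻¹) atTop (𝓝 1)
  simpa using ((hexp.const_sub 1).inv₀ (by norm_num)).sub tendsto_inv_atTop_zero

lemma inv_invOneSubExpNegSubInv {t : ℝ} (ht : 0 < t) :
    (invOneSubExpNegSubInv t)⁻¹ = (1 - exp (-t)) * t / (exp (-t) - 1 + t) := by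
  have := (one_sub_exp_neg_pos ht).ne'
  rw [invOneSubExpNegSubInv]
  field_simp
  ring

theorem stmt_2 (f : ℝ → ℝ)
    (hf : ∀ t, f t = (1 - Real.exp (-t)) * t / (Real.exp (-t) - 1 + t)) :
    StrictAntiOn f (Set.Ioi (0:ℝ)) ∧
    Filter.Tendsto f (nhdsWithin 0 (Set.Ioi 0)) (nhds 2) ∧
    Filter.Tendsto f Filter.atTop (nhds 1) := by
  have hfg : EqOn (fun t => (invOneSubExpNegSubInv t)⁻¹) f (Ioi 0) := fun t ht =>
    (inv_invOneSubExpNegSubInv ht).trans (hf t).symm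
  refine ⟨(strictAntiOn_inv_pos.comp_strictMonoOn strictMonoOn_invOneSubExpNegSubInv
    fun _ ↦ invOneSubExpNegSubInv_pos).congr hfg, ?_, ?_⟩
  · have := tendsto_invOneSubExpNegSubInv_nhdsGT_zero.inv₀ (by norm_num)
    rw [one_div, inv_inv] at this
    exact this.congr' (eventuallyEq_nhdsWithin_of_eqOn hfg)
  · have := tendsto_invOneSubExpNegSubInv_atTop.inv₀ one_ne_zero
    rw [inv_one] at this
    exact this.congr' (hfg.eventuallyEq_of_mem (Ioi_mem_atTop 0))
end

section
/- Let ρ be a measure on (0, +∞) with ∫ min(v, v²) dρ(v) < +∞, and define J(z) = ∫ (e^{-zv} - 1 + zv) dρ(v) for z ≥ 0. Then min{1, t²}·J(z) ≤ J(tz) ≤ max{1, t²}·J(z) for all z ≥ 0 and t > 0. -/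
/-!
Write `J z = ∫ expTail (z v) dρ(v)` with `expTail x = e^{-x} - 1 + x`. Pointwise on `x ≥ 0`,
`expTail` is nondecreasing and `expTail x / x²` is nonincreasing; the latter is the inequality
`x (1 - e^{-x}) ≤ 2 expTail x`. Hence `expTail (t x)` lies between `expTail x` and `t² expTail x`,
and integrating against `ρ` gives the two bounds. Integrability comes from
`expTail (s v) ≤ max s s² · min v v²`.
-/

open Real MeasureTheory Set

noncomputable def expTail (x : ℝ) : ℝ := exp (-x) - 1 + x

lemma expTail_nonneg (x : ℝ) : 0 ≤ expTail x := by
  unfold expTail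
  linarith [add_one_le_exp (-x)]

lemma expTail_le_self {x : ℝ} (hx : 0 ≤ x) : expTail x ≤ x := by
  unfold expTail
  linarith [exp_le_one_iff.2 (neg_nonpos.2 hx)]

lemma expTail_le_sq {x : ℝ} (hx : 0 ≤ x) : expTail x ≤ x ^ 2 := by
  unfold expTail
  have hprod : exp (-x) * exp x = 1 := by rw [← exp_add, neg_add_cancel, exp_zero]
  nlinarith [mul_le_mul_of_nonneg_left (add_one_le_exp x) (exp_pos (-x)).le,
    mul_nonneg (by linarith [add_one_le_exp (-x)] : (0:ℝ) ≤ exp (-x) - (1 - x)) hx]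

lemma hasDerivAt_expTail (x : ℝ) : HasDerivAt expTail (1 - exp (-x)) x :=
  ((((hasDerivAt_neg x).exp).sub_const 1).add (hasDerivAt_id' x)).congr_deriv (by ring)

lemma monotoneOn_expTail : MonotoneOn expTail (Ici 0) := by
  refine monotoneOn_of_deriv_nonneg (convex_Ici 0)
    (fun x _ => (hasDerivAt_expTail x).continuousAt.continuousWithinAt)
    (fun x _ => (hasDerivAt_expTail x).differentiableAt.differentiableWithinAt) fun x hx => ?_
  rw [interior_Ici, mem_Ioi] at hx
  rw [(hasDerivAt_expTail x).deriv, sub_nonneg]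
  exact exp_le_one_iff.2 (by linarith)

/-- Equivalent to `(2 + x) e^{-x} + x - 2 ≥ 0`, a function vanishing at `0` with derivative
`1 - (1 + x) e^{-x} ≥ 0`. -/
lemma mul_one_sub_exp_neg_le_two_mul_expTail {x : ℝ} (hx : 0 ≤ x) :
    x * (1 - exp (-x)) ≤ 2 * expTail x := by
  set ψ : ℝ → ℝ := fun u => (2 + u) * exp (-u) + u - 2
  have hψ : ∀ u, HasDerivAt ψ (1 - (1 + u) * exp (-u)) u := fun u =>
    (((((hasDerivAt_id' u).const_add 2).mul (hasDerivAt_neg u).exp).add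
      (hasDerivAt_id' u)).sub_const 2).congr_deriv (by ring)
  have hmono : Monotone ψ := by
    refine monotone_of_deriv_nonneg (fun u => (hψ u).differentiableAt) fun u => ?_
    rw [(hψ u).deriv, sub_nonneg]
    calc (1 + u) * exp (-u) ≤ exp u * exp (-u) :=
          mul_le_mul_of_nonneg_right (by linarith [add_one_le_exp u]) (exp_pos _).le
      _ = 1 := by rw [← exp_add, add_neg_cancel, exp_zero]
  have := hmono hx
  simp only [ψ, neg_zero, exp_zero] at this
  unfold expTail
  linarith

lemma antitoneOn_expTail_div_sq : AntitoneOn (fun x => expTail x / x ^ 2) (Ioi 0) := by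
  have hderiv : ∀ x : ℝ, x ≠ 0 → HasDerivAt (fun x => expTail x / x ^ 2)
      (((1 - exp (-x)) * x ^ 2 - expTail x * (2 * x)) / (x ^ 2) ^ 2) x := fun x hx =>
    ((hasDerivAt_expTail x).div (hasDerivAt_pow 2 x) (pow_ne_zero 2 hx)).congr_deriv (by simp)
  refine antitoneOn_of_deriv_nonpos (convex_Ioi 0)
    (fun x hx => (hderiv x (ne_of_gt hx)).continuousAt.continuousWithinAt)
    (fun x hx => (hderiv x (ne_of_gt (interior_subset hx))).differentiableAt.differentiableWithinAt)
    fun x hx => ?_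
  rw [interior_Ioi, mem_Ioi] at hx
  rw [(hderiv x hx.ne').deriv]
  refine div_nonpos_of_nonpos_of_nonneg ?_ (by positivity)
  have := mul_one_sub_exp_neg_le_two_mul_expTail hx.le
  nlinarith

lemma expTail_mul_le_sq_mul {t x : ℝ} (ht : 1 ≤ t) (hx : 0 ≤ x) :
    expTail (t * x) ≤ t ^ 2 * expTail x := by
  rcases hx.eq_or_lt with rfl | hx
  · simp [expTail]
  have htx : 0 < t * x := by positivity
  have := antitoneOn_expTail_div_sq hx htx (le_mul_of_one_le_left hx.le ht)
  rw [div_le_div_iff₀ (by positivity) (by positivity)] at this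
  nlinarith [pow_pos hx 2]

lemma min_one_sq_mul_expTail_le {t x : ℝ} (ht : 0 < t) (hx : 0 ≤ x) :
    min 1 (t ^ 2) * expTail x ≤ expTail (t * x) := by
  rcases le_total 1 t with h1 | h1
  · rw [min_eq_left (one_le_pow₀ h1), one_mul]
    exact monotoneOn_expTail hx (mul_nonneg ht.le hx) (le_mul_of_one_le_left hx h1)
  · rw [min_eq_right (pow_le_one₀ ht.le h1)]
    have := expTail_mul_le_sq_mul (one_le_inv_iff₀.2 ⟨ht, h1⟩) (mul_nonneg ht.le hx)
    rw [inv_mul_cancel_left₀ ht.ne'] at this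
    calc t ^ 2 * expTail x ≤ t ^ 2 * (t⁻¹ ^ 2 * expTail (t * x)) := by gcongr
      _ = expTail (t * x) := by field_simp

lemma expTail_mul_le_max_one_sq_mul {t x : ℝ} (ht : 0 < t) (hx : 0 ≤ x) :
    expTail (t * x) ≤ max 1 (t ^ 2) * expTail x := by
  rcases le_total 1 t with h1 | h1
  · rw [max_eq_right (one_le_pow₀ h1)]
    exact expTail_mul_le_sq_mul h1 hx
  · rw [max_eq_left (pow_le_one₀ ht.le h1), one_mul]
    exact monotoneOn_expTail (mul_nonneg ht.le hx) hx (mul_le_of_le_one_left hx h1)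

lemma expTail_mul_le_max_mul_min {s v : ℝ} (hs : 0 ≤ s) (hv : 0 ≤ v) :
    expTail (s * v) ≤ max s (s ^ 2) * min v (v ^ 2) := by
  rcases le_total v 1 with h1 | h1
  · rw [min_eq_right (by nlinarith)]
    calc expTail (s * v) ≤ s ^ 2 * v ^ 2 := by
          simpa only [mul_pow] using expTail_le_sq (mul_nonneg hs hv)
      _ ≤ max s (s ^ 2) * v ^ 2 := by gcongr; exact le_max_right _ _
  · rw [min_eq_left (by nlinarith)]
    calc expTail (s * v) ≤ s * v := expTail_le_self (mul_nonneg hs hv)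
      _ ≤ max s (s ^ 2) * v := by gcongr; exact le_max_left _ _

lemma integrable_expTail_mul {ρ : Measure ℝ} (hpos : ∀ᵐ v ∂ρ, 0 < v)
    (hint : ∫⁻ v, ENNReal.ofReal (min v (v ^ 2)) ∂ρ < ⊤) {s : ℝ} (hs : 0 ≤ s) :
    Integrable (fun v => expTail (s * v)) ρ := by
  have hmin : Integrable (fun v => min v (v ^ 2)) ρ :=
    (lintegral_ofReal_ne_top_iff_integrable (by fun_prop)
      (hpos.mono fun v hv => le_min hv.le (by positivity))).1 hint.ne
  refine (hmin.const_mul (max s (s ^ 2))).mono' (by unfold expTail; fun_prop) ?_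
  filter_upwards [hpos] with v hv
  rw [Real.norm_of_nonneg (expTail_nonneg _)]
  exact expTail_mul_le_max_mul_min hs hv.le

theorem stmt_4 (ρ : Measure ℝ) (hρ : ρ (Set.Iic 0) = 0)
    (hint : ∫⁻ v, ENNReal.ofReal (min v (v ^ 2)) ∂ρ < ⊤)
    (J : ℝ → ℝ)
    (hJ : ∀ z, J z = ∫ v, (Real.exp (-(z * v)) - 1 + z * v) ∂ρ) :
    ∀ z ≥ (0:ℝ), ∀ t > (0:ℝ),
      min 1 (t ^ 2) * J z ≤ J (t * z) ∧ J (t * z) ≤ max 1 (t ^ 2) * J z := by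
  intro z hz t ht
  have hJ' : ∀ z, J z = ∫ v, expTail (z * v) ∂ρ := hJ
  have hpos : ∀ᵐ v ∂ρ, 0 < v := ae_iff.2 (measure_mono_null (fun _ hv => mem_Iic.2 (not_lt.1 hv)) hρ)
  have hIz := integrable_expTail_mul hpos hint hz
  have hItz := integrable_expTail_mul hpos hint (mul_nonneg ht.le hz)
  rw [hJ', hJ', ← integral_const_mul, ← integral_const_mul]
  constructor
  · refine integral_mono_ae (hIz.const_mul _) hItz ?_
    filter_upwards [hpos] with v hv
    simpa only [mul_assoc] using min_one_sq_mul_expTail_le ht (mul_nonneg hz hv.le)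
  · refine integral_mono_ae hItz (hIz.const_mul _) ?_
    filter_upwards [hpos] with v hv
    simpa only [mul_assoc] using expTail_mul_le_max_one_sq_mul ht (mul_nonneg hz hv.le)
end

section
/- Let p, q > 0 with p/q irrational and let G = {m·p + n·q : m, n ∈ ℕ, m ≥ 1, n ≥ 1}. Then for every δ > 0 there exists M > 0 such that for all x ≥ M there exists g ∈ G with |x - g| ≤ δ. -/
/-- Key lemma: if there is a small positive element `r = m*p + n*q` with `m ≥ 1` (integers),
then far enough out, every real is within `δ` of some `a*p + b*q` with naturals `a, b ≥ 1`. -/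
lemma key_aux (p q : ℝ) (hp : 0 < p) (hq : 0 < q) (δ r : ℝ) (hr0 : 0 < r) (hrδ : r ≤ δ)
    (m n : ℤ) (hm : 1 ≤ m) (hrmn : r = m * p + n * q) :
    ∃ M > (0:ℝ), ∀ x ≥ M,
      ∃ g ∈ {x : ℝ | ∃ a b : ℕ, 1 ≤ a ∧ 1 ≤ b ∧ x = a * p + b * q}, |x - g| ≤ δ := by
  set K : ℕ := ⌊q / r⌋₊ + 1 with hK
  refine ⟨((K : ℝ) * ((|n| : ℤ) + 1) + 2) * q, by positivity, fun x hx => ?_⟩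
  set F : ℤ := ⌊x / q⌋ with hF
  set y : ℝ := x - F * q with hy
  have hy0 : 0 ≤ y := Int.sub_floor_div_mul_nonneg x hq
  have hyq : y < q := Int.sub_floor_div_mul_lt x hq
  have hxq : ((K : ℝ) * ((|n| : ℤ) + 1) + 2) ≤ x / q := by
    rw [le_div_iff₀ hq]; exact hx
  have hF1 : ((K : ℝ) * ((|n| : ℤ) + 1) + 1) ≤ (F : ℝ) := by
    have := Int.lt_floor_add_one (x / q)
    linarith
  set k : ℕ := ⌊y / r⌋₊ + 1 with hk
  have hk1n : 1 ≤ k := Nat.succ_le_succ (Nat.zero_le _)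
  have hkK : (k : ℝ) ≤ K := by
    have h1 : ⌊y / r⌋₊ ≤ ⌊q / r⌋₊ := Nat.floor_le_floor (by gcongr)
    have : k ≤ K := Nat.succ_le_succ h1
    exact_mod_cast this
  have hk1 : (k : ℝ) * r - r ≤ y := by
    have h1 : (⌊y / r⌋₊ : ℝ) ≤ y / r := Nat.floor_le (by positivity)
    have h2 : ((k : ℝ) - 1) ≤ y / r := by push_cast [hk]; linarith
    have h3 : ((k : ℝ) - 1) * r ≤ (y / r) * r :=
      mul_le_mul_of_nonneg_right h2 hr0.le
    have h4 : (y / r) * r = y := by field_simp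
    nlinarith
  have hk2 : y < (k : ℝ) * r := by
    have h1 : y / r < (⌊y / r⌋₊ : ℝ) + 1 := Nat.lt_floor_add_one _
    have h2 : y / r < (k : ℝ) := by push_cast [hk]; linarith
    have h3 : (y / r) * r < (k : ℝ) * r := mul_lt_mul_of_pos_right h2 hr0
    have h4 : (y / r) * r = y := by field_simp
    linarith
  have hk0Z : (1 : ℤ) ≤ (k : ℤ) := by exact_mod_cast hk1n
  have hmk : 1 ≤ (k : ℤ) * m := by
    have := mul_le_mul hk0Z hm one_pos.le (by linarith)
    simpa using this
  have hcast : ((|n| : ℤ) : ℝ) = |(n : ℝ)| := by push_cast; ring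
  have hnF : 1 ≤ (k : ℤ) * n + F := by
    have habs : -(|(n : ℝ)|) ≤ (n : ℝ) := neg_abs_le _
    have hk0 : (0:ℝ) ≤ (k : ℝ) := by positivity
    have hK0 : (0:ℝ) ≤ (K : ℝ) := by positivity
    have h1 : (0:ℝ) ≤ ((K : ℝ) - (k : ℝ)) * |(n : ℝ)| :=
      mul_nonneg (by linarith) (abs_nonneg _)
    have h2 : (0:ℝ) ≤ (k : ℝ) * ((n : ℝ) + |(n : ℝ)|) :=
      mul_nonneg hk0 (by linarith)
    have hF1' : (K : ℝ) * (|(n : ℝ)| + 1) + 1 ≤ (F : ℝ) := by rw [← hcast]; exact hF1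
    have : (1 : ℝ) ≤ (k : ℝ) * (n : ℝ) + (F : ℝ) := by nlinarith
    exact_mod_cast this
  have hmk0 : (0 : ℤ) ≤ (k : ℤ) * m := by linarith
  have hnF0 : (0 : ℤ) ≤ (k : ℤ) * n + F := by linarith
  have e1 : ((((k : ℤ) * m).toNat : ℝ)) = (k : ℝ) * (m : ℝ) := by
    have h := Int.toNat_of_nonneg hmk0
    have h2 := congrArg (fun z : ℤ => (z : ℝ)) h
    push_cast at h2 ⊢
    linarith
  have e2 : ((((k : ℤ) * n + F).toNat : ℝ)) = (k : ℝ) * (n : ℝ) + (F : ℝ) := by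
    have h := Int.toNat_of_nonneg hnF0
    have h2 := congrArg (fun z : ℤ => (z : ℝ)) h
    push_cast at h2 ⊢
    linarith
  refine ⟨((k : ℤ) * m).toNat * p + ((k : ℤ) * n + F).toNat * q, ?_, ?_⟩
  · refine ⟨((k : ℤ) * m).toNat, ((k : ℤ) * n + F).toNat, ?_, ?_, rfl⟩
    · have : (1 : ℤ) ≤ (((k : ℤ) * m).toNat : ℤ) := by rw [Int.toNat_of_nonneg hmk0]; exact hmk
      exact_mod_cast this
    · have : (1 : ℤ) ≤ (((k : ℤ) * n + F).toNat : ℤ) := by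
        rw [Int.toNat_of_nonneg hnF0]; exact hnF
      exact_mod_cast this
  · have hxg : x - (((k : ℤ) * m).toNat * p + ((k : ℤ) * n + F).toNat * q)
        = y - (k : ℝ) * r := by
      rw [e1, e2, hrmn, hy]; ring
    rw [hxg, abs_le]
    constructor <;> linarith

theorem stmt_7 (p q : ℝ) (hp : 0 < p) (hq : 0 < q) (hirr : Irrational (p / q)) :
    ∀ δ > (0:ℝ), ∃ M > (0:ℝ), ∀ x ≥ M,
      ∃ g ∈ {x : ℝ | ∃ m n : ℕ, 1 ≤ m ∧ 1 ≤ n ∧ x = m * p + n * q}, |x - g| ≤ δ := by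
  intro δ hδ
  -- the subgroup generated by p and q is dense
  have hdense : Dense ((AddSubgroup.closure {p, q} : AddSubgroup ℝ) : Set ℝ) := by
    rcases AddSubgroup.dense_or_cyclic (AddSubgroup.closure {p, q}) with h | ⟨a, ha⟩
    · exact h
    · exfalso
      have hpmem : p ∈ AddSubgroup.closure ({p, q} : Set ℝ) :=
        AddSubgroup.subset_closure (by simp)
      have hqmem : q ∈ AddSubgroup.closure ({p, q} : Set ℝ) :=
        AddSubgroup.subset_closure (by simp)
      rw [ha, AddSubgroup.mem_closure_singleton] at hpmem hqmem
      obtain ⟨kp, hkp⟩ := hpmem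
      obtain ⟨kq, hkq⟩ := hqmem
      have ha0 : a ≠ 0 := by
        rintro rfl; simp at hkq; linarith
      apply hirr
      refine ⟨(kp : ℚ) / (kq : ℚ), ?_⟩
      rw [zsmul_eq_mul] at hkp hkq
      rw [← hkp, ← hkq]
      push_cast
      rw [mul_div_mul_right _ _ ha0]
  obtain ⟨r, hrmem, hr0, hrδ⟩ : ∃ r ∈ (AddSubgroup.closure ({p, q} : Set ℝ) : Set ℝ),
      0 < r ∧ r < δ := by
    obtain ⟨r, hr1, hr2⟩ := hdense.exists_mem_open isOpen_Ioo
      (Set.nonempty_Ioo.mpr hδ)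
    exact ⟨r, hr1, hr2.1, hr2.2⟩
  rw [SetLike.mem_coe, AddSubgroup.mem_closure_pair] at hrmem
  obtain ⟨m, n, hmn⟩ := hrmem
  simp only [zsmul_eq_mul] at hmn
  rcases le_or_gt 1 m with hm | hm
  · exact key_aux p q hp hq δ r hr0 hrδ.le m n hm hmn.symm
  · -- then n ≥ 1, use the symmetric version
    have hn : 1 ≤ n := by
      by_contra hn
      push_neg at hn
      have hm0 : (m : ℝ) ≤ 0 := by exact_mod_cast (by omega : m ≤ 0)
      have hn0 : (n : ℝ) ≤ 0 := by exact_mod_cast (by omega : n ≤ 0)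
      have h1 : (m : ℝ) * p ≤ 0 := mul_nonpos_of_nonpos_of_nonneg hm0 hp.le
      have h2 : (n : ℝ) * q ≤ 0 := mul_nonpos_of_nonpos_of_nonneg hn0 hq.le
      linarith
    obtain ⟨M, hM, hMall⟩ := key_aux q p hq hp δ r hr0 hrδ.le n m hn
      (by rw [← hmn]; ring)
    refine ⟨M, hM, fun x hx => ?_⟩
    obtain ⟨g, ⟨a, b, ha, hb, hab⟩, hg⟩ := hMall x hx
    exact ⟨g, ⟨b, a, hb, ha, by rw [hab]; ring⟩, hg⟩
end

section
/- Let q be irrational and, for N ∈ ℕ and a subinterval [a,b] ⊆ [0,1), let c(N) = #{j ≤ N : frac(j·q) ∈ [a,b]} where frac denotes the fractional part. Then c(N)/N → b - a as N → ∞ (Weyl's equidistribution theorem). -/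
/-!
Weyl's criterion: the uniform measures on `{q, 2q, …, Nq}` in `ℝ / ℤ` converge weakly to Haar
measure as soon as the integrals of every character `e(nx)` converge. For `n = 0` both integrals
are `1`; for `n ≠ 0` the empirical integral is the average of a geometric progression with ratio
`e(nq) ≠ 1` (as `q` is irrational), hence tends to `0 = ∫ e(nx) dx`. Since the characters span a
dense subspace of `C(ℝ / ℤ, ℂ)` and integration against probability measures is `1`-Lipschitz,
weak convergence follows. The portmanteau theorem then applies to the image of `[a, b]`, whose
frontier is finite and hence null.
-/

open Filter MeasureTheory Set Topology
open scoped Classical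
open scoped Finset

noncomputable section

section WeakConvergence

variable {X : Type*} [TopologicalSpace X] [CompactSpace X] [MeasurableSpace X]
  [OpensMeasurableSpace X] {E : Type*} [NormedAddCommGroup E]

lemma ContinuousMap.integrable_of_compactSpace (μ : Measure X) [IsFiniteMeasure μ]
    (f : C(X, E)) : Integrable f μ :=
  f.continuous.integrable_of_hasCompactSupport (HasCompactSupport.of_compactSpace f)

lemma ContinuousMap.lipschitzWith_integral [NormedSpace ℝ E] (μ : Measure X)
    [IsProbabilityMeasure μ] : LipschitzWith 1 fun f : C(X, E) => ∫ x, f x ∂μ := by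
  refine LipschitzWith.of_dist_le_mul fun f g => ?_
  rw [NNReal.coe_one, one_mul, dist_eq_norm, ← integral_sub
    (f.integrable_of_compactSpace μ) (g.integrable_of_compactSpace μ)]
  calc ‖∫ x, f x - g x ∂μ‖ ≤ dist f g * μ.real univ :=
        norm_integral_le_of_norm_le_const (Eventually.of_forall fun x =>
          (dist_eq_norm (f x) (g x)).symm.trans_le (ContinuousMap.dist_apply_le_dist x))
    _ = dist f g := by simp

namespace MeasureTheory.ProbabilityMeasure

variable {𝕜 : Type*} [RCLike 𝕜] {ι : Type*}
  (l : Filter ι) (μs : ι → ProbabilityMeasure X) (μ : ProbabilityMeasure X)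

def tendstoIntegralSubmodule : Submodule 𝕜 C(X, 𝕜) where
  carrier := {f | Tendsto (fun i => ∫ x, f x ∂(μs i : Measure X)) l
    (𝓝 (∫ x, f x ∂(μ : Measure X)))}
  zero_mem' := by simpa using tendsto_const_nhds
  add_mem' {f g} hf hg := by
    simp only [mem_ofPred_eq, ContinuousMap.add_apply] at hf hg ⊢
    simp_rw [integral_add (f.integrable_of_compactSpace _) (g.integrable_of_compactSpace _)]
    exact hf.add hg
  smul_mem' c f hf := by
    simp only [mem_ofPred_eq, ContinuousMap.smul_apply, integral_smul] at hf ⊢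
    exact hf.const_smul c

lemma isClosed_tendstoIntegralSubmodule :
    IsClosed (tendstoIntegralSubmodule (𝕜 := 𝕜) l μs μ : Set C(X, 𝕜)) :=
  (LipschitzWith.uniformEquicontinuous _ 1 fun i =>
    ContinuousMap.lipschitzWith_integral (μs i : Measure X)).equicontinuous.isClosed_setOfPred_tendsto
    (ContinuousMap.lipschitzWith_integral (μ : Measure X)).continuous

variable {l μs μ}

theorem tendsto_of_tendsto_integral_of_dense_span {S : Set C(X, 𝕜)}
    (hS : (Submodule.span 𝕜 S).topologicalClosure = ⊤)
    (h : ∀ f ∈ S, Tendsto (fun i => ∫ x, f x ∂(μs i : Measure X)) l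
      (𝓝 (∫ x, f x ∂(μ : Measure X)))) :
    Tendsto μs l (𝓝 μ) := by
  have hall : ⊤ ≤ tendstoIntegralSubmodule (𝕜 := 𝕜) l μs μ :=
    hS ▸ Submodule.topologicalClosure_minimal _ (Submodule.span_le.2 h)
      (isClosed_tendstoIntegralSubmodule l μs μ)
  exact (tendsto_iff_forall_integral_rclike_tendsto 𝕜).2 fun f =>
    hall (Submodule.mem_top (x := f.toContinuousMap))

end MeasureTheory.ProbabilityMeasure

end WeakConvergence

section EmpiricalMeasure

variable {X ι : Type*} [MeasurableSpace X] [MeasurableSingletonClass X]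

def empiricalMeasure (s : Finset ι) (x : ι → X) : Measure X :=
  (#s : ENNReal)⁻¹ • ∑ j ∈ s, Measure.dirac (x j)

lemma empiricalMeasure_apply (s : Finset ι) (x : ι → X) (t : Set X) :
    empiricalMeasure s x t = #{j ∈ s | x j ∈ t} / #s := by
  simp [empiricalMeasure, Measure.dirac_apply, Set.indicator_apply, Finset.sum_boole,
    ENNReal.div_eq_inv_mul]

lemma empiricalMeasure_real_apply (s : Finset ι) (x : ι → X) (t : Set X) :
    (empiricalMeasure s x).real t = #{j ∈ s | x j ∈ t} / #s := by
  simp [measureReal_def, empiricalMeasure_apply, ENNReal.toReal_div]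

lemma isProbabilityMeasure_empiricalMeasure {s : Finset ι} (hs : s.Nonempty) (x : ι → X) :
    IsProbabilityMeasure (empiricalMeasure s x) :=
  ⟨by simpa [empiricalMeasure_apply] using
    ENNReal.div_self (Nat.cast_ne_zero.2 hs.card_pos.ne') (ENNReal.natCast_ne_top _)⟩

lemma integral_empiricalMeasure {E : Type*} [NormedAddCommGroup E] [NormedSpace ℝ E]
    [CompleteSpace E] (s : Finset ι) (x : ι → X) (f : X → E) :
    ∫ y, f y ∂empiricalMeasure s x = (#s : ℝ)⁻¹ • ∑ j ∈ s, f (x j) := by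
  rw [empiricalMeasure, integral_smul_measure, integral_finsetSum_measure
    fun j _ => integrable_dirac enorm_lt_top]
  simp only [integral_dirac, ENNReal.toReal_inv, ENNReal.toReal_natCast]

end EmpiricalMeasure

lemma norm_sum_Icc_pow_le {𝕜 : Type*} [NormedField 𝕜] {z : 𝕜} (hz : ‖z‖ ≤ 1) (h1 : z ≠ 1)
    (N : ℕ) : ‖∑ j ∈ Finset.Icc 1 N, z ^ j‖ ≤ 2 / ‖1 - z‖ := by
  rw [← Finset.Ico_add_one_right_eq_Icc, geom_sum_Ico' h1 (by omega), norm_div]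
  gcongr
  calc ‖z ^ 1 - z ^ (N + 1)‖ ≤ ‖z ^ 1‖ + ‖z ^ (N + 1)‖ := norm_sub_le _ _
    _ ≤ 1 + 1 := by gcongr <;> (rw [norm_pow]; exact pow_le_one₀ (norm_nonneg z) hz)
    _ = 2 := one_add_one_eq_two

lemma tendsto_average_pow_zero {𝕜 : Type*} [RCLike 𝕜] {z : 𝕜} (hz : ‖z‖ ≤ 1) (h1 : z ≠ 1) :
    Tendsto (fun N : ℕ => (N : ℝ)⁻¹ • ∑ j ∈ Finset.Icc 1 N, z ^ j) atTop (𝓝 0) := by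
  refine squeeze_zero_norm (fun N => ?_) (tendsto_const_div_atTop_nhds_zero_nat (2 / ‖1 - z‖))
  rw [norm_smul, norm_inv, Real.norm_natCast, inv_mul_eq_div]
  gcongr
  exact norm_sum_Icc_pow_le hz h1 N

namespace AddCircle

variable {T : ℝ}

lemma fourier_coe_natCast_mul (n : ℤ) (j : ℕ) (x : ℝ) :
    fourier n ((j * x : ℝ) : AddCircle T) = fourier n (x : AddCircle T) ^ j := by
  rw [fourier_coe_apply, fourier_coe_apply, ← Complex.exp_nat_mul]
  push_cast
  ring_nf

lemma fourier_coe_ne_one {q : ℝ} (hq : Irrational q) {n : ℤ} (hn : n ≠ 0) :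
    fourier n (q : UnitAddCircle) ≠ 1 := by
  intro h
  have hzero : n • (q : UnitAddCircle) = 0 :=
    injective_toCircle one_ne_zero (Circle.ext (by simpa using h))
  rw [← QuotientAddGroup.mk_zsmul, coe_eq_zero_iff] at hzero
  obtain ⟨m, hm⟩ := hzero
  rw [zsmul_eq_mul, zsmul_eq_mul, mul_one] at hm
  exact (hq.intCast_mul hn).ne_int m hm.symm

lemma integral_fourier_haarAddCircle [Fact (0 < T)] {n : ℤ} (hn : n ≠ 0) :
    ∫ x, fourier n x ∂(haarAddCircle : Measure (AddCircle T)) = 0 :=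
  integral_eq_zero_of_add_right_eq_neg (fourier_add_half_inv_index hn Fact.out)

lemma haarAddCircle_eq_volume : (haarAddCircle : Measure UnitAddCircle) = volume := by
  simp [volume_eq_smul_haarAddCircle]

lemma volume_coe_image_of_subset_Ioc [Fact (0 < T)] {c : ℝ} {t : Set ℝ}
    (ht : t ⊆ Ioc c (c + T)) (hmeas : MeasurableSet ((↑) '' t : Set (AddCircle T))) :
    volume ((↑) '' t : Set (AddCircle T)) = volume t := by
  rw [add_projection_respects_measure T c hmeas]
  congr 1
  ext x
  constructor
  · rintro ⟨⟨y, hy, hyx⟩, hx⟩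
    rwa [← (coe_eq_coe_iff_of_mem_Ioc (ht hy) hx).1 hyx]
  · exact fun hx => ⟨⟨x, hx, rfl⟩, ht hx⟩

lemma coe_mem_image_iff_fract_mem {t : Set ℝ} (ht : t ⊆ Ico 0 1) (x : ℝ) :
    (x : UnitAddCircle) ∈ ((↑) '' t : Set UnitAddCircle) ↔ Int.fract x ∈ t := by
  rw [← coe_fract]
  refine ⟨fun ⟨y, hy, hyx⟩ => ?_, fun h => ⟨_, h, rfl⟩⟩
  have hfract : Int.fract x ∈ Ico 0 (0 + 1) := by
    rw [zero_add]; exact ⟨Int.fract_nonneg x, Int.fract_lt_one x⟩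
  rwa [← (coe_eq_coe_iff_of_mem_Ico (by simpa using ht hy) hfract).1 hyx]

lemma frontier_coe_image_Icc_subset {a b : ℝ} (hab : a ≤ b) :
    frontier ((↑) '' Icc a b : Set (AddCircle T)) ⊆ (↑) '' {a, b} := by
  have hclosed : IsClosed ((↑) '' Icc a b : Set (AddCircle T)) :=
    (isCompact_Icc.image (AddCircle.continuous_mk' T)).isClosed
  have hinterior : ((↑) '' Ioo a b : Set (AddCircle T)) ⊆ interior ((↑) '' Icc a b) :=
    interior_maximal (image_mono Ioo_subset_Icc_self) (QuotientAddGroup.isOpenMap_coe _ isOpen_Ioo)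
  rw [frontier, hclosed.closure_eq, ← Icc_sdiff_Ioo_same hab]
  rintro _ ⟨⟨x, hx, rfl⟩, hx'⟩
  exact ⟨x, ⟨hx, fun h => hx' (hinterior ⟨x, h, rfl⟩)⟩, rfl⟩

end AddCircle

section Weyl

open AddCircle

/-- The uniform measure on `{q, 2q, …, (N + 1)q}`; the shift by one makes it a probability measure
for every `N`. -/
def weylMeasure (q : ℝ) (N : ℕ) : ProbabilityMeasure UnitAddCircle :=
  ⟨empiricalMeasure (Finset.Icc 1 (N + 1)) fun j : ℕ => ((j * q : ℝ) : UnitAddCircle),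
    isProbabilityMeasure_empiricalMeasure ⟨1, by simp⟩ _⟩

lemma tendsto_integral_fourier_weylMeasure {q : ℝ} (hq : Irrational q) (n : ℤ) :
    Tendsto (fun N => ∫ x, fourier n x ∂(weylMeasure q N : Measure UnitAddCircle)) atTop
      (𝓝 (∫ x, fourier n x ∂(haarAddCircle : Measure UnitAddCircle))) := by
  rcases eq_or_ne n 0 with rfl | hn
  · simp
  rw [integral_fourier_haarAddCircle hn]
  refine ((tendsto_average_pow_zero (Circle.norm_coe _).le (fourier_coe_ne_one hq hn)).comp
    (tendsto_add_atTop_nat 1)).congr fun N => ?_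
  simp only [Function.comp_apply, weylMeasure, ProbabilityMeasure.coe_mk,
    integral_empiricalMeasure, Nat.card_Icc, Nat.add_sub_cancel, fourier_coe_natCast_mul]
  rfl

theorem tendsto_weylMeasure {q : ℝ} (hq : Irrational q) :
    Tendsto (weylMeasure q) atTop (𝓝 ⟨haarAddCircle, inferInstance⟩) :=
  ProbabilityMeasure.tendsto_of_tendsto_integral_of_dense_span span_fourier_closure_eq_top
    (by rintro _ ⟨n, rfl⟩; exact tendsto_integral_fourier_weylMeasure hq n)

end Weyl

open AddCircle in
theorem stmt_8 (q : ℝ) (hq : Irrational q) (a b : ℝ)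
    (hab : a ≤ b) (ha : 0 ≤ a) (hb : b < 1) :
    Filter.Tendsto
      (fun N : ℕ =>
        (((Finset.Icc 1 N).filter
            (fun j : ℕ => Int.fract ((j : ℝ) * q) ∈ Set.Icc a b)).card : ℝ) / N)
      Filter.atTop (nhds (b - a)) := by
  set s : Set UnitAddCircle := (↑) '' Icc a b
  have hIcc : Icc a b ⊆ Ioc (b - 1) (b - 1 + 1) := fun x hx =>
    ⟨by linarith [hx.1], by linarith [hx.2]⟩
  have hvol : volume s = ENNReal.ofReal (b - a) := by
    rw [volume_coe_image_of_subset_Ioc hIcc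
      (isCompact_Icc.image (AddCircle.continuous_mk' 1)).isClosed.measurableSet, Real.volume_Icc]
  have hfrontier : (haarAddCircle : Measure UnitAddCircle) (frontier s) = 0 := by
    rw [haarAddCircle_eq_volume]
    refine measure_mono_null (frontier_coe_image_Icc_subset hab) ?_
    rw [volume_coe_image_of_subset_Ioc
      ((pair_subset (left_mem_Icc.2 hab) (right_mem_Icc.2 hab)).trans hIcc)
      ((toFinite _).image _).measurableSet]
    exact (toFinite _).measure_zero _
  have hlim := (ENNReal.tendsto_toReal (measure_ne_top (haarAddCircle : Measure _) s)).comp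
    (ProbabilityMeasure.tendsto_measure_of_null_frontier_of_tendsto' (tendsto_weylMeasure hq)
      hfrontier)
  rw [← tendsto_add_atTop_iff_nat 1]
  convert hlim using 2 with N
  · have hsub : Icc a b ⊆ Ico 0 1 := fun x hx => ⟨ha.trans hx.1, hx.2.trans_lt hb⟩
    simp only [Function.comp_apply, weylMeasure, ProbabilityMeasure.coe_mk, ← measureReal_def,
      empiricalMeasure_real_apply, s, coe_mem_image_iff_fract_mem hsub, Nat.card_Icc,
      Nat.add_sub_cancel]
  · rw [haarAddCircle_eq_volume, hvol, ENNReal.toReal_ofReal (sub_nonneg.2 hab)]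
end
end

section
/- Let γ, Γ be measures on (0,∞) with γ(A) ≤ Γ(A) for all Borel A, 0 < ∫ min(r,r²) dγ ≤ ∫ min(r,r²) dΓ < ∞, and suppose (∫_ε^1 r dγ) ∧ (∫_1^{1/ε} r² dγ) > 0 for all small ε > 0, and that limsup_{ε→0⁺} (∫_ε^1 r dΓ)/(∫_ε^1 r dγ) < ∞ and limsup_{ε→0⁺} (∫_1^{1/ε} r² dΓ)/(∫_1^{1/ε} r² dγ) < ∞. Then there exists K ≥ 1 such that J_Γ(b) ≤ K·J_γ(b) for all b ≥ 0, where J_μ(b) = ∫₀^∞ (e^{-br} - 1 + br) dμ(r). -/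
/-!
Write `phi x = min x x²`. On `[0, ∞)` the integrand `e^{-x} - 1 + x` lies between `phi x / 4` and
`phi x`, so it suffices to compare `phiIntegral μ b = ∫ phi (b r) dμ(r)` for `μ = Γ` and `μ = γ`.
At scale `s = 1/b`, `s² · phiIntegral μ b = ∫_{(0,s]} r² dμ + s ∫_{(s,∞)} r dμ`. For small `s`,
writing `r² = ∫_0^r r dt` (a layer-cake formula) bounds the first term for `Γ` through the
first-moment ratio near `0`; for large `s`, writing `r = r² ∫_0^{1/r} dt` bounds the second term
through the second-moment ratio near `∞`. The pieces left over are controlled by `∫ phi dΓ < ∞`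
and by the positivity of the truncated moments of `γ`, and for `b` in a compact subset of
`(0, ∞)`, `phiIntegral μ b` is comparable to `phiIntegral μ 1`.
-/

open Real MeasureTheory Set Filter Topology
open scoped ENNReal

section LayerCake

variable {α : Type*} [MeasurableSpace α]

theorem setLIntegral_mul_ofReal_eq_lintegral_lt {μ : Measure α} {A : Set α} {w : α → ℝ≥0∞}
    {f : α → ℝ} (hA : MeasurableSet A) (hw : Measurable w) (hf : Measurable f)
    (hf₀ : ∀ x ∈ A, 0 ≤ f x) :
    ∫⁻ x in A, w x * ENNReal.ofReal (f x) ∂μ =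
      ∫⁻ t in Ioi 0, ∫⁻ x in A ∩ {x | t < f x}, w x ∂μ := by
  have hnn : 0 ≤ᵐ[(μ.restrict A).withDensity w] f :=
    withDensity_absolutelyContinuous _ _ ((ae_restrict_iff' hA).2 (.of_forall hf₀))
  have hdens := lintegral_withDensity_eq_lintegral_mul (μ.restrict A) hw hf.ennreal_ofReal
  simp only [Pi.mul_apply] at hdens
  rw [← hdens, lintegral_eq_lintegral_meas_lt _ hnn hf.aemeasurable]
  refine setLIntegral_congr_fun measurableSet_Ioi fun t _ => ?_
  rw [withDensity_apply _ (measurableSet_lt measurable_const hf),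
    Measure.restrict_restrict (measurableSet_lt measurable_const hf), inter_comm]

theorem setLIntegral_mul_ofReal_eq_lintegral_le {μ : Measure α} {A : Set α} {w : α → ℝ≥0∞}
    {f : α → ℝ} (hA : MeasurableSet A) (hw : Measurable w) (hf : Measurable f)
    (hf₀ : ∀ x ∈ A, 0 ≤ f x) :
    ∫⁻ x in A, w x * ENNReal.ofReal (f x) ∂μ =
      ∫⁻ t in Ioi 0, ∫⁻ x in A ∩ {x | t ≤ f x}, w x ∂μ := by
  have hnn : 0 ≤ᵐ[(μ.restrict A).withDensity w] f :=
    withDensity_absolutelyContinuous _ _ ((ae_restrict_iff' hA).2 (.of_forall hf₀))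
  have hdens := lintegral_withDensity_eq_lintegral_mul (μ.restrict A) hw hf.ennreal_ofReal
  simp only [Pi.mul_apply] at hdens
  rw [← hdens, lintegral_eq_lintegral_meas_le _ hnn hf.aemeasurable]
  refine setLIntegral_congr_fun measurableSet_Ioi fun t _ => ?_
  rw [withDensity_apply _ (measurableSet_le measurable_const hf),
    Measure.restrict_restrict (measurableSet_le measurable_const hf), inter_comm]

/-- The superlevel sets are strict for `μ` but not for `ν`: both layer-cake formulas hold, and this
mixed form is exactly what comparisons over half-open intervals `Ioc` give. -/
theorem setLIntegral_mul_ofReal_le_of_superlevel {μ ν : Measure α} {A : Set α}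
    {w : α → ℝ≥0∞} {f : α → ℝ} {T : ℝ} {C m : ℝ≥0∞} (hA : MeasurableSet A) (hw : Measurable w)
    (hf : Measurable f) (hfA : ∀ x ∈ A, 0 ≤ f x ∧ f x ≤ T)
    (h : ∀ t ∈ Ioo 0 T, ∫⁻ x in A ∩ {x | t < f x}, w x ∂μ ≤
      C * (∫⁻ x in A ∩ {x | t ≤ f x}, w x ∂ν + m)) :
    ∫⁻ x in A, w x * ENNReal.ofReal (f x) ∂μ ≤
      C * (∫⁻ x in A, w x * ENNReal.ofReal (f x) ∂ν + ENNReal.ofReal T * m) := by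
  set G : ℝ → ℝ≥0∞ := fun t => ∫⁻ x in A ∩ {x | t ≤ f x}, w x ∂ν
  have hG : Measurable G := Antitone.measurable fun s t hst =>
    lintegral_mono_set (inter_subset_inter_right _ fun x (hx : t ≤ f x) => hst.trans hx)
  have hempty : ∀ t, T ≤ t → A ∩ {x | t < f x} = ∅ := fun t ht =>
    eq_empty_of_forall_notMem fun x hx => (hx.2.trans_le ((hfA x hx.1).2.trans ht)).false
  rw [setLIntegral_mul_ofReal_eq_lintegral_lt hA hw hf fun x hx => (hfA x hx).1,
    setLIntegral_mul_ofReal_eq_lintegral_le hA hw hf fun x hx => (hfA x hx).1]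
  calc ∫⁻ t in Ioi 0, ∫⁻ x in A ∩ {x | t < f x}, w x ∂μ
      ≤ ∫⁻ t in Ioo 0 T ∪ Ici T, ∫⁻ x in A ∩ {x | t < f x}, w x ∂μ :=
        lintegral_mono_set fun t (ht : 0 < t) => (lt_or_ge t T).imp (⟨ht, ·⟩) id
    _ ≤ (∫⁻ t in Ioo 0 T, ∫⁻ x in A ∩ {x | t < f x}, w x ∂μ)
        + ∫⁻ t in Ici T, ∫⁻ x in A ∩ {x | t < f x}, w x ∂μ := lintegral_union_le _ _ _
    _ ≤ (∫⁻ t in Ioo 0 T, C * (G t + m)) + 0 := by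
        refine add_le_add (setLIntegral_mono' measurableSet_Ioo h) ?_
        refine (setLIntegral_congr_fun measurableSet_Ici fun t ht => ?_).trans_le
          lintegral_zero.le
        simp only [hempty t ht, Measure.restrict_empty, lintegral_zero_measure]
    _ = C * ((∫⁻ t in Ioo 0 T, G t) + ENNReal.ofReal T * m) := by
        rw [add_zero, lintegral_const_mul _ (hG.add_const m),
          lintegral_add_right _ measurable_const, setLIntegral_const, Real.volume_Ioo, sub_zero,
          mul_comm m]
    _ ≤ C * ((∫⁻ t in Ioi 0, G t) + ENNReal.ofReal T * m) := by
        gcongr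
        exact Ioo_subset_Ioi_self

end LayerCake

theorem lintegral_ofReal_le_and_ne_zero_of_integral_div_le {α : Type*} [MeasurableSpace α]
    {μ ν : Measure α} {f : α → ℝ} {c : ℝ} (hμ : Integrable f μ) (hfμ : 0 ≤ᵐ[μ] f)
    (hfν : 0 ≤ᵐ[ν] f) (hν : 0 < ∫ x, f x ∂ν) (hc : (∫ x, f x ∂μ) / (∫ x, f x ∂ν) ≤ c) :
    ∫⁻ x, ENNReal.ofReal (f x) ∂μ ≤ ENNReal.ofReal c * ∫⁻ x, ENNReal.ofReal (f x) ∂ν ∧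
      ∫⁻ x, ENNReal.ofReal (f x) ∂ν ≠ 0 := by
  rw [← ofReal_integral_eq_lintegral_ofReal hμ hfμ,
    ← ofReal_integral_eq_lintegral_ofReal (.of_integral_ne_zero hν.ne') hfν,
    ← ENNReal.ofReal_mul' hν.le]
  exact ⟨ENNReal.ofReal_le_ofReal ((div_le_iff₀ hν).1 hc), (ENNReal.ofReal_pos.2 hν).ne'⟩

theorem exists_ne_top_le_mul {x y : ℝ≥0∞} (hx : x ≠ ⊤) (hy : y ≠ 0) : ∃ K ≠ ⊤, x ≤ K * y := by
  by_cases hyt : y = ⊤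
  · exact ⟨1, ENNReal.one_ne_top, by simp [hyt]⟩
  · exact ⟨x / y, ENNReal.div_ne_top hx hy, (ENNReal.div_mul_cancel hy hyt).ge⟩

theorem add_le_two_mul_add_mul_add {x y x' y' C K : ℝ≥0∞} (hx : x' ≤ C * (x + y))
    (hy : y' ≤ (C + K) * y) : x' + y' ≤ (2 * C + K) * (x + y) :=
  calc x' + y' ≤ C * (x + y) + (C + K) * y := add_le_add hx hy
    _ ≤ C * (x + y) + (C + K) * y + (C + K) * x := le_self_add
    _ = (2 * C + K) * (x + y) := by ring

def phi (x : ℝ) : ℝ := min x (x ^ 2)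

@[fun_prop]
theorem measurable_phi : Measurable phi := (continuous_id.min (continuous_pow 2)).measurable

theorem phi_le_self (x : ℝ) : phi x ≤ x := min_le_left _ _

theorem phi_of_le_one {x : ℝ} (h0 : 0 ≤ x) (h1 : x ≤ 1) : phi x = x ^ 2 :=
  min_eq_right (by nlinarith)

theorem phi_of_one_le {x : ℝ} (h1 : 1 ≤ x) : phi x = x :=
  min_eq_left (by nlinarith)

theorem phi_mono : Monotone phi := fun x y hxy => by
  rcases le_total x 0 with hx | hx
  · exact (phi_le_self x).trans (le_min hxy (hx.trans (sq_nonneg y)))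
  · exact min_le_min hxy (pow_le_pow_left₀ hx hxy 2)

theorem ofReal_phi_mul_le (c : ℝ) (hc : 0 ≤ c) (x : ℝ) :
    ENNReal.ofReal (phi (c * x)) ≤ ENNReal.ofReal (max c (c ^ 2)) * ENNReal.ofReal (phi x) := by
  rcases le_total x 0 with hx | hx
  · rw [ENNReal.ofReal_of_nonpos ((phi_le_self _).trans (mul_nonpos_of_nonneg_of_nonpos hc hx))]
    exact zero_le
  rw [← ENNReal.ofReal_mul (hc.trans (le_max_left _ _))]
  refine ENNReal.ofReal_le_ofReal ?_
  rcases le_total x 1 with h | h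
  · rw [phi_of_le_one hx h]
    calc phi (c * x) ≤ (c * x) ^ 2 := min_le_right _ _
      _ ≤ max c (c ^ 2) * x ^ 2 := by nlinarith [le_max_right c (c ^ 2), sq_nonneg x]
  · rw [phi_of_one_le h]
    calc phi (c * x) ≤ c * x := phi_le_self _
      _ ≤ max c (c ^ 2) * x := by nlinarith [le_max_left c (c ^ 2)]

theorem exp_neg_sub_one_add_nonneg (x : ℝ) : 0 ≤ exp (-x) - 1 + x := by
  linarith [add_one_le_exp (-x)]

theorem exp_neg_sub_one_add_le_phi {x : ℝ} (hx : 0 ≤ x) : exp (-x) - 1 + x ≤ phi x := by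
  have h1 : exp (-x) * (1 + x) ≤ 1 :=
    calc exp (-x) * (1 + x) ≤ exp (-x) * exp x := by gcongr; linarith [add_one_le_exp x]
      _ = 1 := by rw [← exp_add, neg_add_cancel, exp_zero]
  refine le_min (by nlinarith [exp_pos (-x)]) ?_
  nlinarith [exp_neg_sub_one_add_nonneg x]

/-- On `[0, 2]` this is `e^{-x} ≥ (1 - x/2)²`; beyond, `phi x = x` and `4 (x - 1) ≥ x`. -/
theorem phi_le_four_mul_exp_neg_sub_one_add (x : ℝ) : phi x ≤ 4 * (exp (-x) - 1 + x) := by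
  rcases le_total x 0 with hx | hx
  · nlinarith [phi_le_self x, exp_neg_sub_one_add_nonneg x]
  rcases le_total x 2 with h | h
  · have hsq : (1 - x / 2) ^ 2 ≤ exp (-x) := by
      have := add_one_le_exp (-(x / 2))
      rw [show -x = -(x / 2) + -(x / 2) by ring, exp_add]
      nlinarith
    calc phi x ≤ x ^ 2 := min_le_right _ _
      _ ≤ 4 * (exp (-x) - 1 + x) := by nlinarith
  · nlinarith [phi_le_self x, exp_pos (-x)]

noncomputable def phiIntegral (μ : Measure ℝ) (b : ℝ) : ℝ≥0∞ :=
  ∫⁻ r, ENNReal.ofReal (phi (b * r)) ∂μ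

theorem phiIntegral_one (μ : Measure ℝ) :
    phiIntegral μ 1 = ∫⁻ r, ENNReal.ofReal (min r (r ^ 2)) ∂μ := by
  simp [phiIntegral, phi]

theorem phiIntegral_zero (μ : Measure ℝ) : phiIntegral μ 0 = 0 := by
  simp [phiIntegral, phi]

theorem phiIntegral_mul_le (μ : Measure ℝ) {c : ℝ} (hc : 0 ≤ c) (b : ℝ) :
    phiIntegral μ (c * b) ≤ ENNReal.ofReal (max c (c ^ 2)) * phiIntegral μ b := by
  rw [phiIntegral, phiIntegral, ← lintegral_const_mul' _ _ ENNReal.ofReal_ne_top]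
  exact lintegral_mono fun r => by rw [mul_assoc]; exact ofReal_phi_mul_le c hc (b * r)

theorem ofReal_sq_mul_phiIntegral_inv (μ : Measure ℝ) {s : ℝ} (hs : 0 < s) :
    ENNReal.ofReal (s ^ 2) * phiIntegral μ s⁻¹ =
      ∫⁻ r in Ioc 0 s, ENNReal.ofReal (r ^ 2) ∂μ +
        ENNReal.ofReal s * ∫⁻ r in Ioi s, ENNReal.ofReal r ∂μ := by
  have hpt : ∀ r, ENNReal.ofReal (s ^ 2) * ENNReal.ofReal (phi (s⁻¹ * r)) =
      (Ioc 0 s).indicator (fun r => ENNReal.ofReal (r ^ 2)) r +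
        ENNReal.ofReal s * (Ioi s).indicator (fun r => ENNReal.ofReal r) r := by
    intro r
    rw [← ENNReal.ofReal_mul (sq_nonneg s), phi, mul_min_of_nonneg _ _ (sq_nonneg s),
      show s ^ 2 * (s⁻¹ * r) = s * r by field_simp, show s ^ 2 * (s⁻¹ * r) ^ 2 = r ^ 2 by
        field_simp]
    rcases le_or_gt r 0 with hr | hr
    · have : min (s * r) (r ^ 2) ≤ 0 := (min_le_left _ _).trans (by nlinarith)
      simp [ENNReal.ofReal_of_nonpos this, hr.not_gt, (hr.trans_lt hs).not_gt]
    rcases le_or_gt r s with hrs | hrs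
    · simp [min_eq_right (by nlinarith : r ^ 2 ≤ s * r), hr, hrs, hrs.not_gt]
    · simp [min_eq_left (by nlinarith : s * r ≤ r ^ 2), hrs, ← ENNReal.ofReal_mul hs.le]
  rw [phiIntegral, ← lintegral_const_mul' _ _ ENNReal.ofReal_ne_top]
  simp_rw [hpt]
  rw [lintegral_add_left ((by fun_prop : Measurable fun r : ℝ => ENNReal.ofReal (r ^ 2)).indicator
      measurableSet_Ioc), lintegral_const_mul' _ _ ENNReal.ofReal_ne_top,
    lintegral_indicator measurableSet_Ioc, lintegral_indicator measurableSet_Ioi]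

section Moments

variable {μ ν : Measure ℝ} {C : ℝ≥0∞} {s : ℝ}

theorem setLIntegral_sq_Ioc_zero_le (hs : s ≤ 1)
    (h : ∀ t ∈ Ioo 0 s,
      ∫⁻ r in Ioc t 1, ENNReal.ofReal r ∂μ ≤ C * ∫⁻ r in Ioc t 1, ENNReal.ofReal r ∂ν) :
    ∫⁻ r in Ioc 0 s, ENNReal.ofReal (r ^ 2) ∂μ ≤
      C * (∫⁻ r in Ioc 0 s, ENNReal.ofReal (r ^ 2) ∂ν +
        ENNReal.ofReal s * ∫⁻ r in Ioc s 1, ENNReal.ofReal r ∂ν) := by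
  have hw : ∀ ρ : Measure ℝ, ∫⁻ r in Ioc 0 s, ENNReal.ofReal (r ^ 2) ∂ρ =
      ∫⁻ r in Ioc 0 s, ENNReal.ofReal r * ENNReal.ofReal r ∂ρ := fun ρ =>
    setLIntegral_congr_fun measurableSet_Ioc fun r hr => by rw [← ENNReal.ofReal_mul hr.1.le, sq]
  rw [hw, hw]
  refine setLIntegral_mul_ofReal_le_of_superlevel measurableSet_Ioc ENNReal.measurable_ofReal
    measurable_id' (fun r hr => ⟨hr.1.le, hr.2⟩) fun t ht => ?_
  have hsplit : ∫⁻ r in Ioc t 1, ENNReal.ofReal r ∂ν =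
      ∫⁻ r in Ioc t s, ENNReal.ofReal r ∂ν + ∫⁻ r in Ioc s 1, ENNReal.ofReal r ∂ν := by
    rw [← lintegral_union measurableSet_Ioc (Ioc_disjoint_Ioc_of_le le_rfl),
      Ioc_union_Ioc_eq_Ioc ht.2.le hs]
  calc _ ≤ ∫⁻ r in Ioc t 1, ENNReal.ofReal r ∂μ :=
        lintegral_mono_set fun r hr => ⟨hr.2, hr.1.2.trans hs⟩
    _ ≤ C * ∫⁻ r in Ioc t 1, ENNReal.ofReal r ∂ν := h t ht
    _ ≤ _ := by
        rw [hsplit]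
        gcongr
        exact fun r hr => ⟨⟨ht.1.trans hr.1, hr.2⟩, hr.1.le⟩

theorem setLIntegral_Ioi_le (hs : 1 ≤ s)
    (h : ∀ t ∈ Ioo 0 s⁻¹, ∫⁻ r in Ioc 1 t⁻¹, ENNReal.ofReal (r ^ 2) ∂μ ≤
      C * ∫⁻ r in Ioc 1 t⁻¹, ENNReal.ofReal (r ^ 2) ∂ν) :
    ∫⁻ r in Ioi s, ENNReal.ofReal r ∂μ ≤
      C * (∫⁻ r in Ioi s, ENNReal.ofReal r ∂ν +
        ENNReal.ofReal s⁻¹ * ∫⁻ r in Ioc 1 s, ENNReal.ofReal (r ^ 2) ∂ν) := by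
  have hs₀ : 0 < s := one_pos.trans_le hs
  have hw : ∀ ρ : Measure ℝ, ∫⁻ r in Ioi s, ENNReal.ofReal r ∂ρ =
      ∫⁻ r in Ioi s, ENNReal.ofReal (r ^ 2) * ENNReal.ofReal r⁻¹ ∂ρ := fun ρ =>
    setLIntegral_congr_fun measurableSet_Ioi fun r (hr : s < r) => by
      rw [← ENNReal.ofReal_mul (sq_nonneg r)]
      field_simp [(hs₀.trans hr).ne']
  rw [hw, hw]
  refine setLIntegral_mul_ofReal_le_of_superlevel measurableSet_Ioi
    (ENNReal.measurable_ofReal.comp (measurable_id.pow_const 2)) measurable_inv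
    (fun r (hr : s < r) => ⟨inv_nonneg.2 (hs₀.trans hr).le, inv_anti₀ hs₀ hr.le⟩)
    fun t ht => ?_
  have hst : s < t⁻¹ := (lt_inv_comm₀ ht.1 hs₀).1 ht.2
  have hsplit : ∫⁻ r in Ioc 1 t⁻¹, ENNReal.ofReal (r ^ 2) ∂ν =
      ∫⁻ r in Ioc s t⁻¹, ENNReal.ofReal (r ^ 2) ∂ν +
        ∫⁻ r in Ioc 1 s, ENNReal.ofReal (r ^ 2) ∂ν := by
    rw [add_comm, ← lintegral_union measurableSet_Ioc (Ioc_disjoint_Ioc_of_le le_rfl),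
      Ioc_union_Ioc_eq_Ioc hs hst.le]
  calc _ ≤ ∫⁻ r in Ioc 1 t⁻¹, ENNReal.ofReal (r ^ 2) ∂μ :=
        lintegral_mono_set fun r hr =>
          ⟨hs.trans_lt hr.1, ((lt_inv_comm₀ ht.1 (hs₀.trans hr.1)).1 hr.2).le⟩
    _ ≤ C * ∫⁻ r in Ioc 1 t⁻¹, ENNReal.ofReal (r ^ 2) ∂ν := h t ht
    _ ≤ _ := by
        rw [hsplit]
        gcongr
        exact fun r hr => ⟨hr.1, (le_inv_comm₀ ht.1 (hs₀.trans hr.1)).2 hr.2⟩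

end Moments

section Regimes

variable {γ Γ : Measure ℝ} {C K : ℝ≥0∞} {δ ε : ℝ}

theorem phiIntegral_inv_le_iff {s : ℝ} (hs : 0 < s) :
    phiIntegral Γ s⁻¹ ≤ K * phiIntegral γ s⁻¹ ↔
      ∫⁻ r in Ioc 0 s, ENNReal.ofReal (r ^ 2) ∂Γ +
          ENNReal.ofReal s * ∫⁻ r in Ioi s, ENNReal.ofReal r ∂Γ ≤
        K * (∫⁻ r in Ioc 0 s, ENNReal.ofReal (r ^ 2) ∂γ +
          ENNReal.ofReal s * ∫⁻ r in Ioi s, ENNReal.ofReal r ∂γ) := by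
  rw [← ofReal_sq_mul_phiIntegral_inv Γ hs, ← ofReal_sq_mul_phiIntegral_inv γ hs, mul_left_comm,
    ENNReal.mul_le_mul_iff_right (ENNReal.ofReal_pos.2 (by positivity)).ne' ENNReal.ofReal_ne_top]

theorem phiIntegral_inv_le_of_small_scale {s : ℝ} (hδ : δ ≤ 1) (hs : s ∈ Ioo 0 δ) (hsε : s ≤ ε)
    (hC : ∀ t ∈ Ioo 0 δ,
      ∫⁻ r in Ioc t 1, ENNReal.ofReal r ∂Γ ≤ C * ∫⁻ r in Ioc t 1, ENNReal.ofReal r ∂γ)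
    (hK : ∫⁻ r in Ioi 1, ENNReal.ofReal r ∂Γ ≤ K * ∫⁻ r in Ioc ε 1, ENNReal.ofReal r ∂γ) :
    phiIntegral Γ s⁻¹ ≤ (2 * C + K) * phiIntegral γ s⁻¹ := by
  have hs1 : s ≤ 1 := hs.2.le.trans hδ
  have hP := setLIntegral_sq_Ioc_zero_le hs1 fun t ht => hC t ⟨ht.1, ht.2.trans hs.2⟩
  have hT : ∫⁻ r in Ioi s, ENNReal.ofReal r ∂Γ ≤ (C + K) * ∫⁻ r in Ioi s, ENNReal.ofReal r ∂γ :=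
    calc ∫⁻ r in Ioi s, ENNReal.ofReal r ∂Γ
        = ∫⁻ r in Ioc s 1, ENNReal.ofReal r ∂Γ + ∫⁻ r in Ioi 1, ENNReal.ofReal r ∂Γ := by
          rw [← lintegral_union measurableSet_Ioi Ioc_disjoint_Ioi_same, Ioc_union_Ioi_eq_Ioi hs1]
      _ ≤ C * ∫⁻ r in Ioc s 1, ENNReal.ofReal r ∂γ + K * ∫⁻ r in Ioc ε 1, ENNReal.ofReal r ∂γ :=
          add_le_add (hC s hs) hK
      _ ≤ C * ∫⁻ r in Ioi s, ENNReal.ofReal r ∂γ + K * ∫⁻ r in Ioi s, ENNReal.ofReal r ∂γ := by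
          gcongr
          · exact Ioc_subset_Ioi_self
          · exact fun r hr => hsε.trans_lt hr.1
      _ = (C + K) * ∫⁻ r in Ioi s, ENNReal.ofReal r ∂γ := (add_mul _ _ _).symm
  rw [phiIntegral_inv_le_iff hs.1]
  refine add_le_two_mul_add_mul_add (hP.trans ?_) ?_
  · gcongr
    exact Ioc_subset_Ioi_self
  · calc ENNReal.ofReal s * ∫⁻ r in Ioi s, ENNReal.ofReal r ∂Γ
        ≤ ENNReal.ofReal s * ((C + K) * ∫⁻ r in Ioi s, ENNReal.ofReal r ∂γ) := by gcongr
      _ = (C + K) * (ENNReal.ofReal s * ∫⁻ r in Ioi s, ENNReal.ofReal r ∂γ) := mul_left_comm _ _ _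

theorem phiIntegral_inv_le_of_large_scale {u : ℝ} (hδ : δ ≤ 1) (hu : u⁻¹ ∈ Ioo 0 δ)
    (hεu : ε⁻¹ ≤ u)
    (hC : ∀ t ∈ Ioo 0 δ, ∫⁻ r in Ioc 1 t⁻¹, ENNReal.ofReal (r ^ 2) ∂Γ ≤
      C * ∫⁻ r in Ioc 1 t⁻¹, ENNReal.ofReal (r ^ 2) ∂γ)
    (hK : ∫⁻ r in Ioc 0 1, ENNReal.ofReal (r ^ 2) ∂Γ ≤
      K * ∫⁻ r in Ioc 1 ε⁻¹, ENNReal.ofReal (r ^ 2) ∂γ) :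
    phiIntegral Γ u⁻¹ ≤ (2 * C + K) * phiIntegral γ u⁻¹ := by
  have hu₀ : 0 < u := inv_pos.1 hu.1
  have hu1 : 1 ≤ u := ((inv_lt_one₀ hu₀).1 (hu.2.trans_le hδ)).le
  have hT := setLIntegral_Ioi_le hu1 fun t ht => hC t ⟨ht.1, ht.2.trans hu.2⟩
  have hP : ∫⁻ r in Ioc 0 u, ENNReal.ofReal (r ^ 2) ∂Γ ≤
      (C + K) * ∫⁻ r in Ioc 0 u, ENNReal.ofReal (r ^ 2) ∂γ :=
    calc ∫⁻ r in Ioc 0 u, ENNReal.ofReal (r ^ 2) ∂Γ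
        = ∫⁻ r in Ioc 1 u, ENNReal.ofReal (r ^ 2) ∂Γ +
            ∫⁻ r in Ioc 0 1, ENNReal.ofReal (r ^ 2) ∂Γ := by
          rw [add_comm, ← lintegral_union measurableSet_Ioc (Ioc_disjoint_Ioc_of_le le_rfl),
            Ioc_union_Ioc_eq_Ioc zero_le_one hu1]
      _ ≤ C * ∫⁻ r in Ioc 1 u, ENNReal.ofReal (r ^ 2) ∂γ +
            K * ∫⁻ r in Ioc 1 ε⁻¹, ENNReal.ofReal (r ^ 2) ∂γ :=
          add_le_add (by simpa only [inv_inv] using hC u⁻¹ hu) hK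
      _ ≤ C * ∫⁻ r in Ioc 0 u, ENNReal.ofReal (r ^ 2) ∂γ +
            K * ∫⁻ r in Ioc 0 u, ENNReal.ofReal (r ^ 2) ∂γ := by
          gcongr <;> exact zero_le_one
      _ = (C + K) * ∫⁻ r in Ioc 0 u, ENNReal.ofReal (r ^ 2) ∂γ := (add_mul _ _ _).symm
  rw [phiIntegral_inv_le_iff hu₀, add_comm (∫⁻ r in Ioc 0 u, _ ∂Γ),
    add_comm (∫⁻ r in Ioc 0 u, _ ∂γ)]
  refine add_le_two_mul_add_mul_add ?_ hP
  calc ENNReal.ofReal u * ∫⁻ r in Ioi u, ENNReal.ofReal r ∂Γ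
      ≤ ENNReal.ofReal u * (C * (∫⁻ r in Ioi u, ENNReal.ofReal r ∂γ +
          ENNReal.ofReal u⁻¹ * ∫⁻ r in Ioc 1 u, ENNReal.ofReal (r ^ 2) ∂γ)) := by gcongr
    _ = C * (ENNReal.ofReal u * ∫⁻ r in Ioi u, ENNReal.ofReal r ∂γ +
          ENNReal.ofReal (u * u⁻¹) * ∫⁻ r in Ioc 1 u, ENNReal.ofReal (r ^ 2) ∂γ) := by
        rw [ENNReal.ofReal_mul hu₀.le]
        ring
    _ ≤ C * (ENNReal.ofReal u * ∫⁻ r in Ioi u, ENNReal.ofReal r ∂γ +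
          ∫⁻ r in Ioc 0 u, ENNReal.ofReal (r ^ 2) ∂γ) := by
        rw [mul_inv_cancel₀ hu₀.ne', ENNReal.ofReal_one, one_mul]
        gcongr
        exact zero_le_one

theorem max_le_inv_sq_of_mem_Icc {b : ℝ} (hε : 0 < ε) (hb : b ∈ Icc ε ε⁻¹) :
    max b (b ^ 2) ≤ ε⁻¹ ^ 2 := by
  have h1 : 1 ≤ ε⁻¹ := by
    have := mul_inv_cancel₀ hε.ne'
    nlinarith [hb.1.trans hb.2, inv_pos.2 hε]
  exact max_le (by nlinarith [hb.2]) (pow_le_pow_left₀ (hε.le.trans hb.1) hb.2 2)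

theorem phiIntegral_le_of_mem_Icc {b : ℝ} (hε : 0 < ε) (hb : b ∈ Icc ε ε⁻¹)
    (h : phiIntegral Γ 1 ≤ K * phiIntegral γ 1) :
    phiIntegral Γ b ≤ ENNReal.ofReal (ε⁻¹ ^ 2) ^ 2 * K * phiIntegral γ b := by
  have hb₀ : 0 < b := hε.trans_le hb.1
  have hb' : b⁻¹ ∈ Icc ε ε⁻¹ :=
    ⟨(le_inv_comm₀ hε hb₀).2 hb.2, inv_anti₀ hε hb.1⟩
  have hΓ : phiIntegral Γ b ≤ ENNReal.ofReal (ε⁻¹ ^ 2) * phiIntegral Γ 1 :=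
    calc phiIntegral Γ b = phiIntegral Γ (b * 1) := by rw [mul_one]
      _ ≤ ENNReal.ofReal (max b (b ^ 2)) * phiIntegral Γ 1 := phiIntegral_mul_le Γ hb₀.le 1
      _ ≤ _ := by gcongr; exact max_le_inv_sq_of_mem_Icc hε hb
  have hγ : phiIntegral γ 1 ≤ ENNReal.ofReal (ε⁻¹ ^ 2) * phiIntegral γ b :=
    calc phiIntegral γ 1 = phiIntegral γ (b⁻¹ * b) := by rw [inv_mul_cancel₀ hb₀.ne']
      _ ≤ ENNReal.ofReal (max b⁻¹ (b⁻¹ ^ 2)) * phiIntegral γ b :=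
          phiIntegral_mul_le γ (inv_nonneg.2 hb₀.le) b
      _ ≤ _ := by gcongr; exact max_le_inv_sq_of_mem_Icc hε hb'
  calc phiIntegral Γ b ≤ ENNReal.ofReal (ε⁻¹ ^ 2) * (K * phiIntegral γ 1) :=
        hΓ.trans (by gcongr)
    _ ≤ ENNReal.ofReal (ε⁻¹ ^ 2) * (K * (ENNReal.ofReal (ε⁻¹ ^ 2) * phiIntegral γ b)) := by
        gcongr
    _ = ENNReal.ofReal (ε⁻¹ ^ 2) ^ 2 * K * phiIntegral γ b := by ring

end Regimes

theorem setLIntegral_sq_Ioc_zero_one_add_setLIntegral_Ioi_one (μ : Measure ℝ) :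
    ∫⁻ r in Ioc 0 1, ENNReal.ofReal (r ^ 2) ∂μ + ∫⁻ r in Ioi 1, ENNReal.ofReal r ∂μ =
      phiIntegral μ 1 := by
  simpa using (ofReal_sq_mul_phiIntegral_inv μ one_pos).symm

theorem exists_phiIntegral_le_mul {γ Γ : Measure ℝ} {C₁ C₂ : ℝ≥0∞} (hC₁ : C₁ ≠ ⊤)
    (hC₂ : C₂ ≠ ⊤) (hΓ : phiIntegral Γ 1 ≠ ⊤) (hγ : phiIntegral γ 1 ≠ 0)
    (hsmall : ∀ᶠ ε in 𝓝[>] 0,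
      ∫⁻ r in Ioc ε 1, ENNReal.ofReal r ∂Γ ≤ C₁ * ∫⁻ r in Ioc ε 1, ENNReal.ofReal r ∂γ ∧
        ∫⁻ r in Ioc ε 1, ENNReal.ofReal r ∂γ ≠ 0)
    (hlarge : ∀ᶠ ε in 𝓝[>] 0,
      ∫⁻ r in Ioc 1 ε⁻¹, ENNReal.ofReal (r ^ 2) ∂Γ ≤
          C₂ * ∫⁻ r in Ioc 1 ε⁻¹, ENNReal.ofReal (r ^ 2) ∂γ ∧
        ∫⁻ r in Ioc 1 ε⁻¹, ENNReal.ofReal (r ^ 2) ∂γ ≠ 0) :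
    ∃ K ≠ ⊤, ∀ b, 0 ≤ b → phiIntegral Γ b ≤ K * phiIntegral γ b := by
  obtain ⟨δ₀, hδ₀, hsub⟩ := mem_nhdsGT_iff_exists_Ioo_subset.1 (hsmall.and hlarge)
  set δ := min δ₀ 1
  have hδ1 : δ ≤ 1 := min_le_right _ _
  have hmem : ∀ t ∈ Ioo 0 δ, _ := fun t ht => hsub ⟨ht.1, ht.2.trans_le (min_le_left _ _)⟩
  set ε := δ / 2
  have hε : ε ∈ Ioo 0 δ := ⟨half_pos (lt_min hδ₀ one_pos), half_lt_self (lt_min hδ₀ one_pos)⟩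
  have hpieces := setLIntegral_sq_Ioc_zero_one_add_setLIntegral_Ioi_one Γ
  obtain ⟨K₁, hK₁, h₁⟩ := exists_ne_top_le_mul
    (ne_top_of_le_ne_top hΓ (hpieces ▸ le_add_self)) (hmem ε hε).1.2
  obtain ⟨K₂, hK₂, h₂⟩ := exists_ne_top_le_mul
    (ne_top_of_le_ne_top hΓ (hpieces ▸ le_self_add)) (hmem ε hε).2.2
  obtain ⟨K₃, hK₃, h₃⟩ := exists_ne_top_le_mul hΓ hγ
  refine ⟨(2 * C₁ + K₁) + (2 * C₂ + K₂) + ENNReal.ofReal (ε⁻¹ ^ 2) ^ 2 * K₃, by finiteness,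
    fun b hb => ?_⟩
  rcases hb.eq_or_lt with rfl | hb₀
  · simp [phiIntegral_zero]
  rcases lt_or_ge b ε with hbε | hεb
  · have h := phiIntegral_inv_le_of_large_scale (u := b⁻¹) hδ1
      (by rw [inv_inv]; exact ⟨hb₀, hbε.trans hε.2⟩) (inv_anti₀ hb₀ hbε.le)
      (fun t ht => (hmem t ht).2.1) h₂
    rw [inv_inv] at h
    exact h.trans (mul_le_mul_of_nonneg_right (le_add_self.trans le_self_add) zero_le)
  rcases le_or_gt b ε⁻¹ with hbε | hbε
  · exact (phiIntegral_le_of_mem_Icc hε.1 ⟨hεb, hbε⟩ h₃).trans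
      (mul_le_mul_of_nonneg_right le_add_self zero_le)
  · have hb' : b⁻¹ < ε := (inv_lt_comm₀ hb₀ hε.1).2 hbε
    have h := phiIntegral_inv_le_of_small_scale (s := b⁻¹) hδ1 ⟨inv_pos.2 hb₀, hb'.trans hε.2⟩
      hb'.le (fun t ht => (hmem t ht).1.1) h₁
    rw [inv_inv] at h
    exact h.trans (mul_le_mul_of_nonneg_right (le_self_add.trans le_self_add) zero_le)

theorem measure_Ioi_lt_top_of_phiIntegral_ne_top {μ : Measure ℝ} (h : phiIntegral μ 1 ≠ ⊤)
    {a : ℝ} (ha : 0 < a) : μ (Ioi a) < ⊤ := by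
  have hpa : ENNReal.ofReal (phi a) ≠ 0 := (ENNReal.ofReal_pos.2 (lt_min ha (by positivity))).ne'
  calc μ (Ioi a) ≤ μ {r | ENNReal.ofReal (phi a) ≤ ENNReal.ofReal (phi (1 * r))} :=
        measure_mono fun r (hr : a < r) =>
          ENNReal.ofReal_le_ofReal (by rw [one_mul]; exact phi_mono hr.le)
    _ ≤ phiIntegral μ 1 / ENNReal.ofReal (phi a) :=
        meas_ge_le_lintegral_div (by fun_prop) hpa ENNReal.ofReal_ne_top
    _ < ⊤ := ENNReal.div_lt_top h hpa

theorem integrableOn_Ioc_of_phiIntegral_ne_top {μ : Measure ℝ} (h : phiIntegral μ 1 ≠ ⊤)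
    {g : ℝ → ℝ} (hg : Continuous g) {a b : ℝ} (ha : 0 < a) : IntegrableOn g (Ioc a b) μ := by
  obtain ⟨M, hM⟩ := (isCompact_Icc (a := a) (b := b)).exists_bound_of_continuousOn hg.continuousOn
  exact Measure.integrableOn_of_bounded
    ((measure_mono Ioc_subset_Ioi_self).trans_lt (measure_Ioi_lt_top_of_phiIntegral_ne_top h ha)).ne
    hg.aestronglyMeasurable
    (ae_restrict_of_forall_mem measurableSet_Ioc fun x hx => hM x (Ioc_subset_Icc_self hx))

theorem eventually_setLIntegral_Ioc_one_le {γ Γ : Measure ℝ} {c : ℝ} (hΓ : phiIntegral Γ 1 ≠ ⊤)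
    (hpos : ∀ᶠ ε in 𝓝[>] 0, 0 < ∫ r in Ioc ε 1, r ∂γ)
    (hc : ∀ᶠ ε in 𝓝[>] 0, (∫ r in Ioc ε 1, r ∂Γ) / (∫ r in Ioc ε 1, r ∂γ) ≤ c) :
    ∀ᶠ ε in 𝓝[>] 0,
      ∫⁻ r in Ioc ε 1, ENNReal.ofReal r ∂Γ ≤
          ENNReal.ofReal c * ∫⁻ r in Ioc ε 1, ENNReal.ofReal r ∂γ ∧
        ∫⁻ r in Ioc ε 1, ENNReal.ofReal r ∂γ ≠ 0 := by
  filter_upwards [self_mem_nhdsWithin, hpos, hc] with ε (hε : 0 < ε) hpos hc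
  have hnn : ∀ μ : Measure ℝ, 0 ≤ᵐ[μ.restrict (Ioc ε 1)] fun r => r := fun μ =>
    ae_restrict_of_forall_mem measurableSet_Ioc fun r hr => (hε.trans hr.1).le
  exact lintegral_ofReal_le_and_ne_zero_of_integral_div_le
    (integrableOn_Ioc_of_phiIntegral_ne_top hΓ continuous_id hε) (hnn Γ) (hnn γ) hpos hc

theorem eventually_setLIntegral_Ioc_one_inv_le {γ Γ : Measure ℝ} {c : ℝ}
    (hΓ : phiIntegral Γ 1 ≠ ⊤) (hpos : ∀ᶠ ε in 𝓝[>] 0, 0 < ∫ r in Ioc 1 ε⁻¹, r ^ 2 ∂γ)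
    (hc : ∀ᶠ ε in 𝓝[>] 0,
      (∫ r in Ioc 1 ε⁻¹, r ^ 2 ∂Γ) / (∫ r in Ioc 1 ε⁻¹, r ^ 2 ∂γ) ≤ c) :
    ∀ᶠ ε in 𝓝[>] 0,
      ∫⁻ r in Ioc 1 ε⁻¹, ENNReal.ofReal (r ^ 2) ∂Γ ≤
          ENNReal.ofReal c * ∫⁻ r in Ioc 1 ε⁻¹, ENNReal.ofReal (r ^ 2) ∂γ ∧
        ∫⁻ r in Ioc 1 ε⁻¹, ENNReal.ofReal (r ^ 2) ∂γ ≠ 0 := by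
  filter_upwards [hpos, hc] with ε hpos hc
  have hnn : ∀ μ : Measure ℝ, 0 ≤ᵐ[μ.restrict (Ioc 1 ε⁻¹)] fun r => r ^ 2 := fun μ =>
    ae_of_all _ fun r => sq_nonneg r
  exact lintegral_ofReal_le_and_ne_zero_of_integral_div_le
    (integrableOn_Ioc_of_phiIntegral_ne_top hΓ (continuous_pow 2) one_pos) (hnn Γ) (hnn γ) hpos hc

section LaplaceExponent

variable {μ : Measure ℝ} {b : ℝ}

theorem lintegral_exp_neg_sub_one_add_le_phiIntegral (h0 : μ (Iic 0) = 0) (hb : 0 ≤ b) :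
    ∫⁻ r, ENNReal.ofReal (exp (-(b * r)) - 1 + b * r) ∂μ ≤ phiIntegral μ b := by
  refine lintegral_mono_ae ((measure_eq_zero_iff_ae_notMem.1 h0).mono fun r hr => ?_)
  exact ENNReal.ofReal_le_ofReal
    (exp_neg_sub_one_add_le_phi (mul_nonneg hb (not_le.1 hr).le))

theorem phiIntegral_le_four_mul_lintegral_exp_neg_sub_one_add (μ : Measure ℝ) (b : ℝ) :
    phiIntegral μ b ≤ 4 * ∫⁻ r, ENNReal.ofReal (exp (-(b * r)) - 1 + b * r) ∂μ := by
  rw [← lintegral_const_mul' _ _ (by simp)]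
  refine lintegral_mono fun r => (ENNReal.ofReal_le_ofReal
    (phi_le_four_mul_exp_neg_sub_one_add (b * r))).trans_eq ?_
  rw [ENNReal.ofReal_mul (by norm_num), ENNReal.ofReal_ofNat]

theorem integral_exp_neg_sub_one_add_eq_toReal (μ : Measure ℝ) (b : ℝ) :
    ∫ r, (exp (-(b * r)) - 1 + b * r) ∂μ =
      (∫⁻ r, ENNReal.ofReal (exp (-(b * r)) - 1 + b * r) ∂μ).toReal :=
  integral_eq_lintegral_of_nonneg_ae (ae_of_all _ fun r => exp_neg_sub_one_add_nonneg _)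
    (by fun_prop)

end LaplaceExponent

theorem integral_exp_neg_sub_one_add_le_of_phiIntegral_le {γ Γ : Measure ℝ} {K : ℝ≥0∞} {b : ℝ}
    (hγ0 : γ (Iic 0) = 0) (hΓ0 : Γ (Iic 0) = 0) (hb : 0 ≤ b) (hK : K ≠ ⊤)
    (hγ : phiIntegral γ b ≠ ⊤) (h : phiIntegral Γ b ≤ K * phiIntegral γ b) :
    ∫ r, (exp (-(b * r)) - 1 + b * r) ∂Γ ≤
      (4 * K).toReal * ∫ r, (exp (-(b * r)) - 1 + b * r) ∂γ := by
  have hLγ := lintegral_exp_neg_sub_one_add_le_phiIntegral hγ0 hb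
  rw [integral_exp_neg_sub_one_add_eq_toReal, integral_exp_neg_sub_one_add_eq_toReal,
    ← ENNReal.toReal_mul]
  refine ENNReal.toReal_mono (ENNReal.mul_ne_top (by finiteness) (ne_top_of_le_ne_top hγ hLγ)) ?_
  calc _ ≤ phiIntegral Γ b := lintegral_exp_neg_sub_one_add_le_phiIntegral hΓ0 hb
    _ ≤ K * phiIntegral γ b := h
    _ ≤ K * (4 * ∫⁻ r, ENNReal.ofReal (exp (-(b * r)) - 1 + b * r) ∂γ) := by
        gcongr
        exact phiIntegral_le_four_mul_lintegral_exp_neg_sub_one_add γ b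
    _ = _ := by ring

theorem stmt_14_general (γ Γ : Measure ℝ)
    (hΓ0 : Γ (Set.Iic 0) = 0)
    (hle : γ ≤ Γ)
    (hpos : 0 < ∫⁻ r, ENNReal.ofReal (min r (r ^ 2)) ∂γ)
    (hfin : ∫⁻ r, ENNReal.ofReal (min r (r ^ 2)) ∂Γ < ⊤)
    (hposε : ∃ ε₀ > (0:ℝ), ∀ ε ∈ Set.Ioo (0:ℝ) ε₀,
      0 < min (∫ r in Set.Ioc ε 1, r ∂γ) (∫ r in Set.Ioc 1 (1 / ε), r ^ 2 ∂γ))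
    (hlim0 : Filter.IsBoundedUnder (· ≤ ·) (nhdsWithin 0 (Set.Ioi 0))
      (fun ε => (∫ r in Set.Ioc ε 1, r ∂Γ) / (∫ r in Set.Ioc ε 1, r ∂γ)))
    (hliminfty : Filter.IsBoundedUnder (· ≤ ·) (nhdsWithin 0 (Set.Ioi 0))
      (fun ε => (∫ r in Set.Ioc 1 (1 / ε), r ^ 2 ∂Γ) / (∫ r in Set.Ioc 1 (1 / ε), r ^ 2 ∂γ)))
    (Jγ JΓ : ℝ → ℝ)
    (hJγ : ∀ b, Jγ b = ∫ r, (Real.exp (-(b * r)) - 1 + b * r) ∂γ)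
    (hJΓ : ∀ b, JΓ b = ∫ r, (Real.exp (-(b * r)) - 1 + b * r) ∂Γ) :
    ∃ K ≥ (1:ℝ), ∀ b ≥ (0:ℝ), JΓ b ≤ K * Jγ b := by
  have hγ0 : γ (Iic 0) = 0 := le_antisymm ((Measure.le_iff'.1 hle _).trans hΓ0.le) zero_le
  have hΓ1 : phiIntegral Γ 1 ≠ ⊤ := phiIntegral_one Γ ▸ hfin.ne
  have hγ1 : phiIntegral γ 1 ≠ ⊤ := ne_top_of_le_ne_top hΓ1 (lintegral_mono' hle le_rfl)
  obtain ⟨ε₀, hε₀, hposε⟩ := hposε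
  have hmin := eventually_of_mem (Ioo_mem_nhdsGT hε₀) hposε
  obtain ⟨c₁, hc₁⟩ := hlim0
  obtain ⟨c₂, hc₂⟩ := hliminfty
  obtain ⟨K, hK, hcmp⟩ := exists_phiIntegral_le_mul ENNReal.ofReal_ne_top ENNReal.ofReal_ne_top hΓ1
    (phiIntegral_one γ ▸ hpos.ne')
    (eventually_setLIntegral_Ioc_one_le hΓ1 (hmin.mono fun _ h => h.trans_le (min_le_left _ _))
      (eventually_map.1 hc₁))
    (eventually_setLIntegral_Ioc_one_inv_le hΓ1
      (hmin.mono fun _ h => by simpa only [one_div] using h.trans_le (min_le_right _ _))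
      (by simpa only [one_div] using eventually_map.1 hc₂))
  refine ⟨max (4 * K).toReal 1, le_max_right _ _, fun b hb => ?_⟩
  have hγb : phiIntegral γ b ≠ ⊤ :=
    ne_top_of_le_ne_top (ENNReal.mul_ne_top ENNReal.ofReal_ne_top hγ1)
      (by simpa only [mul_one] using phiIntegral_mul_le γ hb 1)
  rw [hJΓ, hJγ]
  exact (integral_exp_neg_sub_one_add_le_of_phiIntegral_le hγ0 hΓ0 hb hK hγb (hcmp b hb)).trans
    (mul_le_mul_of_nonneg_right (le_max_left _ _)
      (integral_nonneg fun r => exp_neg_sub_one_add_nonneg _))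

theorem stmt_14 (γ Γ : Measure ℝ)
    (hγ0 : γ (Set.Iic 0) = 0) (hΓ0 : Γ (Set.Iic 0) = 0)
    (hle : γ ≤ Γ)
    (hpos : 0 < ∫⁻ r, ENNReal.ofReal (min r (r ^ 2)) ∂γ)
    (hfin : ∫⁻ r, ENNReal.ofReal (min r (r ^ 2)) ∂Γ < ⊤)
    (hposε : ∃ ε₀ > (0:ℝ), ∀ ε ∈ Set.Ioo (0:ℝ) ε₀,
      0 < min (∫ r in Set.Ioc ε 1, r ∂γ) (∫ r in Set.Ioc 1 (1 / ε), r ^ 2 ∂γ))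
    (hlim0 : Filter.IsBoundedUnder (· ≤ ·) (nhdsWithin 0 (Set.Ioi 0))
      (fun ε => (∫ r in Set.Ioc ε 1, r ∂Γ) / (∫ r in Set.Ioc ε 1, r ∂γ)))
    (hliminfty : Filter.IsBoundedUnder (· ≤ ·) (nhdsWithin 0 (Set.Ioi 0))
      (fun ε => (∫ r in Set.Ioc 1 (1 / ε), r ^ 2 ∂Γ) / (∫ r in Set.Ioc 1 (1 / ε), r ^ 2 ∂γ)))
    (Jγ JΓ : ℝ → ℝ)
    (hJγ : ∀ b, Jγ b = ∫ r, (Real.exp (-(b * r)) - 1 + b * r) ∂γ)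
    (hJΓ : ∀ b, JΓ b = ∫ r, (Real.exp (-(b * r)) - 1 + b * r) ∂Γ) :
    ∃ K ≥ (1:ℝ), ∀ b ≥ (0:ℝ), JΓ b ≤ K * Jγ b :=
  stmt_14_general γ Γ hΓ0 hle hpos hfin hposε hlim0 hliminfty Jγ JΓ hJγ hJΓ
end
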